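/- arXiv:1903.04380 — 7 statements merged into one kernel-verified Lean document; each statement's English description precedes it below -/
import Mathlib

section
/- In every Gallai coloring of the complete graph K_n (an edge coloring with no triangle receiving three distinct colors) there exists a color class containing at least n-1 edges (equivalently, there is a monochromatic spanning connected subgraph). -/
/-- An edge coloring of `K_n` (edges = non-diagonal elements of `Sym2 (Fin n)`)
is a Gallai coloring if no triangle receives three pairwise distinct colors. -/
def IsGallai {n : ℕ} {C : Type*} (c : Sym2 (Fin n) → C) : Prop :=
  ∀ a b d : Fin n, a ≠ b → b ≠ d → a ≠ d →
    c s(a, b) = c s(b, d) ∨ c s(b, d) = c s(a, d) ∨ c s(a, b) = c s(a, d)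

/-- The number of edges of `K_n` receiving color `i`. -/
def colorCard {n : ℕ} {C : Type*} [DecidableEq C] (c : Sym2 (Fin n) → C) (i : C) : ℕ :=
  (Finset.univ.filter (fun e : Sym2 (Fin n) => ¬ e.IsDiag ∧ c e = i)).card

open SimpleGraph


/-- A connected graph on a finite vertex type has at least `card V - 1` edges. -/
lemma conn_card_le {V : Type*} [Fintype V] [DecidableEq V] (G : SimpleGraph V)
    [DecidableRel G.Adj] (h : G.Connected) :
    Fintype.card V - 1 ≤ G.edgeFinset.card := by
  obtain ⟨root⟩ := h.nonempty
  have hpar : ∀ v : V, v ≠ root → ∃ u, G.Adj v u ∧ G.dist root u < G.dist root v := by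
    intro v hv
    obtain ⟨p, hp⟩ := h.exists_walk_length_eq_dist v root
    cases p with
    | nil => exact absurd rfl hv
    | cons h' p' =>
      refine ⟨_, h', ?_⟩
      have h3 := SimpleGraph.dist_le p'
      rw [SimpleGraph.dist_comm] at h3
      have h2 : G.dist v root = p'.length + 1 := by simpa using hp.symm
      rw [SimpleGraph.dist_comm] at h2
      omega
  choose! par hadj hdist using hpar
  have key : Fintype.card {v : V // ¬ v = root} ≤ Fintype.card G.edgeSet := by
    refine Fintype.card_le_of_injective
      (fun v => ⟨s(v.1, par v.1), (G.mem_edgeSet).2 (hadj v.1 v.2)⟩) ?_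
    rintro ⟨v, hv⟩ ⟨w, hw⟩ hvw
    simp only [Subtype.mk.injEq, Sym2.eq_iff] at hvw ⊢
    rcases hvw with ⟨h1, h2⟩ | ⟨h1, h2⟩
    · exact h1
    · exfalso
      have d1 := hdist v hv
      have d2 := hdist w hw
      rw [h2] at d1; rw [← h1] at d2
      omega
  rw [Fintype.card_subtype_compl, Fintype.card_subtype_eq] at key
  rwa [SimpleGraph.edgeFinset_card]

/-- The monochromatic graph of color `i`. -/
def gallaiGraph {n : ℕ} {C : Type*} (c : Sym2 (Fin n) → C) (i : C) : SimpleGraph (Fin n) :=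
  SimpleGraph.fromRel (fun a b => c s(a, b) = i)

instance {n : ℕ} {C : Type*} [DecidableEq C] (c : Sym2 (Fin n) → C) (i : C) :
    DecidableRel (gallaiGraph c i).Adj :=
  fun a b => decidable_of_iff _ (SimpleGraph.fromRel_adj _ a b).symm

lemma gallai_conn {C : Type*} [DecidableEq C] :
    ∀ (n : ℕ) (c : Sym2 (Fin (n+1)) → C), IsGallai c → ∃ i, (gallaiGraph c i).Connected := by
  intro n
  induction n with
  | zero =>
    intro c _
    exact ⟨c s(0, 0), SimpleGraph.Connected.mk (fun a b => by rw [Fin.fin_one_eq_zero a, Fin.fin_one_eq_zero b])⟩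
  | succ n ih =>
    intro c hc
    set e : Fin (n+1) → Fin (n+2) := Fin.castSucc with he
    have einj : Function.Injective e := Fin.castSucc_injective _
    have elast : ∀ a, e a ≠ Fin.last (n+1) := fun a => (Fin.castSucc_lt_last a).ne
    set c' : Sym2 (Fin (n+1)) → C := fun x => c (Sym2.map e x) with hc'
    have hmap : ∀ a b, c' s(a, b) = c s(e a, e b) := fun a b => by
      simp [hc', Sym2.map_pair_eq]
    have hg' : IsGallai c' := by
      intro a b d hab hbd had
      rw [hmap, hmap, hmap]
      exact hc _ _ _ (fun h => hab (einj h)) (fun h => hbd (einj h)) (fun h => had (einj h))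
    obtain ⟨i, hi⟩ := ih c' hg'
    have hhom : ∀ a b, (gallaiGraph c' i).Adj a b → (gallaiGraph c i).Adj (e a) (e b) := by
      intro a b hab
      rw [gallaiGraph, SimpleGraph.fromRel_adj] at hab ⊢
      refine ⟨fun h => hab.1 (einj h), ?_⟩
      rcases hab.2 with h | h
      · exact Or.inl ((hmap a b).symm.trans h)
      · exact Or.inr ((hmap b a).symm.trans h)
    let φ : gallaiGraph c' i →g gallaiGraph c i := ⟨e, fun h => hhom _ _ h⟩
    by_cases hcase : ∃ a : Fin (n+1), c s(e a, Fin.last (n+1)) = i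
    · obtain ⟨a, ha⟩ := hcase
      have hreach : ∀ v : Fin (n+2), (gallaiGraph c i).Reachable v (e a) := by
        intro v
        induction v using Fin.lastCases with
        | last =>
          exact SimpleGraph.Adj.reachable
            ((SimpleGraph.fromRel_adj _ _ _).2 ⟨(elast a).symm, Or.inr ha⟩)
        | cast w => exact SimpleGraph.Reachable.map φ (hi.preconnected w a)
      exact ⟨i, SimpleGraph.Connected.mk (fun u v => (hreach u).trans (hreach v).symm)⟩
    · push_neg at hcase
      have key : ∀ a b, (gallaiGraph c' i).Adj a b →
          c s(e a, Fin.last (n+1)) = c s(e b, Fin.last (n+1)) := by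
        intro a b hab
        rw [gallaiGraph, SimpleGraph.fromRel_adj] at hab
        have hab' : c s(e a, e b) = i := by
          rcases hab.2 with h | h
          · exact (hmap a b).symm.trans h
          · exact (Sym2.eq_swap ▸ (hmap b a).symm.trans h : _)
        have hne : e a ≠ e b := fun h => hab.1 (einj h)
        rcases hc (e a) (e b) (Fin.last _) hne (elast b) (elast a) with h | h | h
        · exact absurd (hab' ▸ h.symm) (hcase b)
        · exact h.symm
        · exact absurd (hab' ▸ h.symm) (hcase a)
      have prop : ∀ a b, (gallaiGraph c' i).Reachable a b →
          c s(e a, Fin.last (n+1)) = c s(e b, Fin.last (n+1)) := by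
        intro a b hr
        obtain ⟨w⟩ := hr
        induction w with
        | nil => rfl
        | cons h w ih2 => exact (key _ _ h).trans ih2
      set j := c s(e 0, Fin.last (n+1)) with hj
      have hall : ∀ a, c s(e a, Fin.last (n+1)) = j :=
        fun a => (prop 0 a (hi.preconnected 0 a)).symm
      have hreach : ∀ v, (gallaiGraph c j).Reachable v (Fin.last (n+1)) := by
        intro v
        induction v using Fin.lastCases with
        | last => exact SimpleGraph.Reachable.refl _
        | cast w =>
          exact SimpleGraph.Adj.reachable
            ((SimpleGraph.fromRel_adj _ _ _).2 ⟨elast w, Or.inl (hall w)⟩)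
      exact ⟨j, SimpleGraph.Connected.mk (fun u v => (hreach u).trans (hreach v).symm)⟩

/-- In every Gallai coloring of `K_n` some color class contains at least `n-1` edges. -/
theorem gallai_exists_large_color (n : ℕ) {C : Type*} [DecidableEq C] [Nonempty C]
    (c : Sym2 (Fin n) → C) (hc : IsGallai c) :
    ∃ i : C, n - 1 ≤ colorCard c i := by
  match n, c, hc with
  | 0, c, hc => exact ⟨Classical.arbitrary C, by simp⟩
  | (m+1), c, hc =>
    obtain ⟨i, hi⟩ := gallai_conn m c hc
    refine ⟨i, ?_⟩
    have h1 := conn_card_le (gallaiGraph c i) hi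
    rw [Fintype.card_fin] at h1
    have h2 : colorCard c i = (gallaiGraph c i).edgeFinset.card := by
      rw [colorCard]
      congr 1
      ext x
      induction x using Sym2.ind with
      | _ a b =>
        rw [SimpleGraph.mem_edgeFinset]
        simp only [Finset.mem_filter, Finset.mem_univ, true_and,
          SimpleGraph.mem_edgeFinset, SimpleGraph.mem_edgeSet, gallaiGraph,
          SimpleGraph.fromRel_adj, Sym2.isDiag_iff_proj_eq]
        constructor
        · rintro ⟨h, h'⟩; exact ⟨h, Or.inl h'⟩
        · rintro ⟨h, h' | h'⟩
          · exact ⟨h, h'⟩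
          · exact ⟨h, (Sym2.eq_swap ▸ h' : _)⟩
    omega
end

section
/- For all positive integers n and ℓ, in every Gallai coloring of K_n there exist at most ℓ colors such that the total number of edges colored with these colors is at least (n-1) + (n-2) + ... + (n-ℓ). -/
set_option linter.unusedSectionVars false

open Finset

lemma choose_succ_two (k : ℕ) : (k+1).choose 2 = k.choose 2 + k := by
  show (k+1).choose (1+1) = k.choose (1+1) + k
  rw [Nat.choose_succ_succ' k 1, Nat.choose_one_right]
  omega

/-- merge identity for choose 2 -/
lemma merge_choose (a b : ℕ) (ha : 1 ≤ a) (hb : 1 ≤ b) :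
    a.choose 2 + b.choose 2 ≤ (a + b - 1).choose 2 := by
  obtain ⟨a, rfl⟩ := Nat.exists_eq_add_of_le ha
  obtain ⟨b, rfl⟩ := Nat.exists_eq_add_of_le hb
  have key : ∀ x y : ℕ, (x+1).choose 2 + (y+1).choose 2 + x*y = (x+y+1).choose 2 := by
    intro x y
    induction y with
    | zero => simp
    | succ k ih =>
      have h1 := choose_succ_two (k+1)
      have h2 := choose_succ_two (x+k+1)
      have e : x+(k+1)+1 = (x+k+1)+1 := by omega
      rw [e, h2]
      have e2 : x * (k+1) = x*k + x := by ring
      omega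
  have := key a b
  have e : 1 + a + (1 + b) - 1 = a + b + 1 := by omega
  rw [e]
  have e2 : 1 + a = a + 1 := by omega
  have e3 : 1 + b = b + 1 := by omega
  rw [e2, e3]
  omega

/-- sum identity: (n-1)+(n-2)+...+(n-ℓ) + C(n-ℓ,2) ≤ C(n,2) -/
lemma sum_range_le (n ℓ : ℕ) :
    (∑ j ∈ Finset.range ℓ, (n - 1 - j)) + (n - ℓ).choose 2 ≤ n.choose 2 := by
  induction ℓ with
  | zero => simp
  | succ k ih =>
    rw [Finset.sum_range_succ]
    rcases le_or_gt n (k+1) with h | h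
    · have h1 : n - 1 - k = 0 := by omega
      have h2 : n - (k+1) = 0 := by omega
      have h4 : n - k ≤ 1 := by omega
      have h5 : (n - k).choose 2 = 0 := by
        rcases Nat.le_one_iff_eq_zero_or_eq_one.mp h4 with h' | h' <;> rw [h'] <;> rfl
      rw [h1, h2] at *
      rw [h5] at ih
      simpa using ih
    · have e : n - k = (n - (k+1)) + 1 := by omega
      have h6 := choose_succ_two (n - (k+1))
      rw [e, h6] at ih
      have e2 : n - 1 - k = n - (k+1) := by omega
      omega

section Defs
variable {α C : Type*} [DecidableEq α] [DecidableEq C]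

/-- the Gallai property, over an arbitrary vertex type -/
def Gallai (c : Sym2 α → C) : Prop :=
  ∀ a b d : α, a ≠ b → b ≠ d → a ≠ d →
    c s(a, b) = c s(b, d) ∨ c s(b, d) = c s(a, d) ∨ c s(a, b) = c s(a, d)

def eRel (c : Sym2 α → C) (V : Finset α) (s : C) (a b : α) : Prop :=
  a ∈ V ∧ b ∈ V ∧ a ≠ b ∧ c s(a, b) = s

def Reach (c : Sym2 α → C) (V : Finset α) (s : C) : α → α → Prop :=
  Relation.ReflTransGen (eRel c V s)

lemma eRel_symm (c : Sym2 α → C) (V : Finset α) (s : C) : Symmetric (eRel c V s) := by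
  rintro a b ⟨ha, hb, hab, hcol⟩
  exact ⟨hb, ha, hab.symm, by rwa [Sym2.eq_swap]⟩

lemma Reach.symm {c : Sym2 α → C} {V : Finset α} {s : C} {a b : α}
    (h : Reach c V s a b) : Reach c V s b a :=
  by haveI : Std.Symm (eRel c V s) := ⟨eRel_symm c V s⟩
     exact Std.Symm.symm (r := Relation.ReflTransGen (eRel c V s)) _ _ h

lemma Reach_mem_left {c : Sym2 α → C} {V : Finset α} {s : C} {a b : α}
    (hA : a ∈ V) (h : Reach c V s a b) : b ∈ V := by
  induction h with
  | refl => exact hA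
  | tail _ hr _ => exact hr.2.1

/-- Lemma Z : everything in the component of `x` looks the same towards outside vertices. -/
lemma lemmaZ {c : Sym2 α → C} (hc : Gallai c) {V : Finset α} {s : C} {x z y : α}
    (hz : Reach c V s x z) (hy : y ∈ V) (hxy : ¬ Reach c V s x y) :
    c s(z, y) = c s(x, y) := by
  induction hz with
  | refl => rfl
  | @tail b z' hb hrel ih =>
    -- hb : Reach x b, hrel : eRel b z'
    obtain ⟨hbV, hz'V, hbz', hcol⟩ := hrel
    have hby : b ≠ y := by
      rintro rfl; exact hxy hb
    have hz'y : z' ≠ y := by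
      rintro rfl; exact hxy (hb.tail ⟨hbV, hz'V, hbz', hcol⟩)
    have hcby : c s(b, y) ≠ s := by
      intro h
      exact hxy (hb.tail ⟨hbV, hy, hby, h⟩)
    have hcz'y : c s(z', y) ≠ s := by
      intro h
      exact hxy ((hb.tail ⟨hbV, hz'V, hbz', hcol⟩).tail ⟨hz'V, hy, hz'y, h⟩)
    -- triangle z', b, y
    rcases hc z' b y (Ne.symm hbz') hby hz'y with h | h | h
    · -- c s(z',b) = c s(b,y), but c s(z',b) = s
      rw [Sym2.eq_swap] at h
      rw [hcol] at h
      exact absurd h.symm hcby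
    · -- c s(b,y) = c s(z',y)
      rw [← h, ih]
    · -- c s(z',b) = c s(z',y)
      rw [Sym2.eq_swap] at h
      rw [hcol] at h
      exact absurd h.symm hcz'y

def Colors (c : Sym2 α → C) (V : Finset α) : Finset C :=
  (V.sym2.filter (fun e => ¬ e.IsDiag)).image c

lemma mem_Colors {c : Sym2 α → C} {V : Finset α} {g : C} :
    g ∈ Colors c V ↔ ∃ a b, a ∈ V ∧ b ∈ V ∧ a ≠ b ∧ c s(a, b) = g := by
  unfold Colors
  constructor
  · intro h
    rw [Finset.mem_image] at h
    obtain ⟨e, he, hce⟩ := h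
    rw [Finset.mem_filter] at he
    revert hce
    revert he
    induction e using Sym2.ind with
    | _ a b =>
      intro he hce
      rw [Finset.mk_mem_sym2_iff] at he
      exact ⟨a, b, he.1.1, he.1.2, by simpa using he.2, hce⟩
  · rintro ⟨a, b, ha, hb, hab, hcol⟩
    rw [Finset.mem_image]
    refine ⟨s(a, b), ?_, hcol⟩
    rw [Finset.mem_filter, Finset.mk_mem_sym2_iff]
    exact ⟨⟨ha, hb⟩, by simpa using hab⟩

def Incident (c : Sym2 α → C) (V : Finset α) (s : C) (x : α) : Prop :=
  ∃ x' ∈ V, x' ≠ x ∧ c s(x, x') = s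

def AllConn (c : Sym2 α → C) (V : Finset α) : Prop :=
  ∀ (s : C) (x : α), x ∈ V → Incident c V s x → ∀ y ∈ V, Reach c V s x y

theorem claimD {c : Sym2 α → C} (hc : Gallai c) :
    ∀ (V : Finset α), AllConn c V → (Colors c V).card ≤ 2 := by
  intro V
  induction V using Finset.strongInduction with
  | _ V IH =>
    intro hall
    by_contra h3'
    push_neg at h3'
    -- h3' : 2 < (Colors c V).card
    have fsees : ∀ g ∈ Colors c V, ∀ y ∈ V, ∃ y' ∈ V, y' ≠ y ∧ c s(y, y') = g := by
      intro g hg y hy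
      obtain ⟨a, b, ha, hb, hab, hcol⟩ := mem_Colors.mp hg
      have hinc : Incident c V g a := ⟨b, hb, hab.symm, hcol⟩
      have hreach : Reach c V g a y := hall g a ha hinc y hy
      rcases Relation.ReflTransGen.cases_tail hreach with h | ⟨b', hb', hrel⟩
      · subst h
        exact ⟨b, hb, hab.symm, hcol⟩
      · obtain ⟨hb'V, hyV, hb'y, hcol'⟩ := hrel
        exact ⟨b', hb'V, hb'y, by rwa [Sym2.eq_swap]⟩
    have hVne : V.Nonempty := by
      rcases Finset.card_pos.mp (by omega : 0 < (Colors c V).card) with ⟨g, hg⟩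
      obtain ⟨a, _, ha, _, _, _⟩ := mem_Colors.mp hg
      exact ⟨a, ha⟩
    obtain ⟨v, hv⟩ := hVne
    set W := V.erase v with hWdef
    have hWV : W ⊆ V := Finset.erase_subset _ _
    have hmemW : ∀ a, a ∈ W ↔ a ≠ v ∧ a ∈ V := fun a => Finset.mem_erase
    -- colors survive
    have hsurv : Colors c V ⊆ Colors c W := by
      intro g hg
      have h2c : ∃ h ∈ Colors c V, h ≠ g := Finset.exists_mem_ne (by omega) g
      obtain ⟨h, hh, hhg⟩ := h2c
      obtain ⟨y₂, hy₂, hy₂v, hcol₂⟩ := fsees h hh v hv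
      obtain ⟨y', hy', hy'y₂, hcol'⟩ := fsees g hg y₂ hy₂
      have hy'v : y' ≠ v := by
        rintro rfl
        rw [Sym2.eq_swap] at hcol'
        rw [hcol₂] at hcol'
        exact hhg hcol'
      exact mem_Colors.mpr ⟨y₂, y', (hmemW y₂).mpr ⟨hy₂v, hy₂⟩, (hmemW y').mpr ⟨hy'v, hy'⟩,
        Ne.symm hy'y₂, hcol'⟩
    have hWcard : 2 < (Colors c W).card := lt_of_lt_of_le h3' (Finset.card_le_card hsurv)
    have hWss : W ⊂ V := Finset.erase_ssubset hv
    have hnall : ¬ AllConn c W := by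
      intro h
      have := IH W hWss h
      omega
    unfold AllConn at hnall
    push_neg at hnall
    obtain ⟨s, x₀, hx₀W, hinc₀, y₀, hy₀W, hbad⟩ := hnall
    -- s is a color of V
    have hsV : s ∈ Colors c V := by
      obtain ⟨x', hx'W, hx'x₀, hcol⟩ := hinc₀
      exact mem_Colors.mpr ⟨x₀, x', hWV hx₀W, hWV hx'W, Ne.symm hx'x₀, hcol⟩
    -- every vertex of V is s-incident in V
    have hPall : ∀ u ∈ V, Incident c V s u := by
      intro u hu
      obtain ⟨u', hu', hneu, hcol⟩ := fsees s hsV u hu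
      exact ⟨u', hu', hneu, hcol⟩
    -- P2
    have hP2 : ∀ u ∈ W, ∃ z ∈ W, Reach c W s u z ∧ c s(v, z) = s := by
      intro u huW
      have huv : u ≠ v := ((hmemW u).mp huW).1
      have huV : u ∈ V := hWV huW
      have hRV : Reach c V s u v := hall s u huV (hPall u huV) v hv
      have key : ∀ t, Reach c V s u t →
          (t ≠ v ∧ Reach c W s u t) ∨ (∃ z ∈ W, Reach c W s u z ∧ c s(v, z) = s) := by
        intro t ht
        induction ht with
        | refl => exact Or.inl ⟨huv, Relation.ReflTransGen.refl⟩
        | @tail b t' hb hrel ihh =>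
          rcases ihh with ⟨hbv, hbr⟩ | hgoal
          · obtain ⟨hbV, ht'V, hbt', hcol⟩ := hrel
            by_cases ht'v : t' = v
            · subst ht'v
              refine Or.inr ⟨b, (hmemW b).mpr ⟨hbv, hbV⟩, hbr, ?_⟩
              rwa [Sym2.eq_swap]
            · exact Or.inl ⟨ht'v,
                hbr.tail ⟨(hmemW b).mpr ⟨hbv, hbV⟩, (hmemW t').mpr ⟨ht'v, ht'V⟩, hbt', hcol⟩⟩
          · exact Or.inr hgoal
      rcases key v hRV with ⟨hvv, _⟩ | hgoal
      · exact absurd rfl hvv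
      · exact hgoal
    -- gamma step
    have hstar : ∀ y ∈ W, c s(v, y) ≠ s → ∀ z ∈ W, ¬ Reach c W s y z → c s(v, z) = s →
        c s(v, y) = c s(z, y) := by
      intro y hyW hys z hzW hnr hzs
      have hyv : y ≠ v := ((hmemW y).mp hyW).1
      have hzv : z ≠ v := ((hmemW z).mp hzW).1
      have hzy : z ≠ y := by
        rintro rfl
        exact hnr Relation.ReflTransGen.refl
      have hβ : c s(z, y) ≠ s := by
        intro h
        exact hnr (Relation.ReflTransGen.single ⟨hyW, hzW, Ne.symm hzy, by rwa [Sym2.eq_swap]⟩)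
      have hzvs : c s(z, v) = s := by rwa [Sym2.eq_swap]
      rcases hc z v y hzv (Ne.symm hyv) hzy with h | h | h
      · rw [hzvs] at h
        exact absurd h.symm hys
      · exact h
      · rw [hzvs] at h
        exact absurd h.symm hβ
    -- star has at most colors {s, γ*}
    have hmain : ∀ y₁ ∈ W, ∀ y₂ ∈ W, c s(v, y₁) ≠ s → c s(v, y₂) ≠ s →
        c s(v, y₁) = c s(v, y₂) := by
      intro y₁ hy₁W y₂ hy₂W h1 h2
      by_cases hr : Reach c W s y₁ y₂
      · obtain ⟨u, huW, hnr⟩ : ∃ u ∈ W, ¬ Reach c W s y₁ u := by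
          by_cases hx : Reach c W s y₁ x₀
          · exact ⟨y₀, hy₀W, fun h => hbad (hx.symm.trans h)⟩
          · exact ⟨x₀, hx₀W, hx⟩
        obtain ⟨z, hzW, hzr, hzs⟩ := hP2 u huW
        have hnz1 : ¬ Reach c W s y₁ z := fun h => hnr (h.trans hzr.symm)
        have hnz2 : ¬ Reach c W s y₂ z := fun h => hnz1 (hr.trans h)
        have e1 := hstar y₁ hy₁W h1 z hzW hnz1 hzs
        have e2 := hstar y₂ hy₂W h2 z hzW hnz2 hzs
        have e3 : c s(y₂, z) = c s(y₁, z) := lemmaZ hc hr hzW hnz1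
        have e3' : c s(z, y₁) = c s(z, y₂) := by
          calc c s(z, y₁) = c s(y₁, z) := by rw [Sym2.eq_swap]
            _ = c s(y₂, z) := e3.symm
            _ = c s(z, y₂) := by rw [Sym2.eq_swap]
        rw [e1, e2, e3']
      · obtain ⟨z2, hz2W, hz2r, hz2s⟩ := hP2 y₂ hy₂W
        have hnr12 : ¬ Reach c W s y₁ z2 := fun h => hr (h.trans hz2r.symm)
        have e1 := hstar y₁ hy₁W h1 z2 hz2W hnr12 hz2s
        have e3 : c s(z2, y₁) = c s(y₂, y₁) :=
          lemmaZ hc hz2r hy₁W (fun h => hr h.symm)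
        obtain ⟨z1, hz1W, hz1r, hz1s⟩ := hP2 y₁ hy₁W
        have hnr21 : ¬ Reach c W s y₂ z1 := fun h => hr (hz1r.trans h.symm)
        have e2 := hstar y₂ hy₂W h2 z1 hz1W hnr21 hz1s
        have e4 : c s(z1, y₂) = c s(y₁, y₂) :=
          lemmaZ hc hz1r hy₂W hr
        rw [e1, e3, e2, e4, Sym2.eq_swap]
      -- end
    -- final pigeonhole
    obtain ⟨g₁, g₂, g₃, hg₁, hg₂, hg₃, h12, h13, h23⟩ := Finset.two_lt_card_iff.mp h3'
    have key : ∀ g g', g ∈ Colors c V → g' ∈ Colors c V → g ≠ g' → g ≠ s → g' ≠ s → False := by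
      intro g g' hg hg' hne hgs hg's
      obtain ⟨y, hy, hyv, hcy⟩ := fsees g hg v hv
      obtain ⟨y', hy', hy'v, hcy'⟩ := fsees g' hg' v hv
      have := hmain y ((hmemW y).mpr ⟨hyv, hy⟩) y' ((hmemW y').mpr ⟨hy'v, hy'⟩)
        (by rw [hcy]; exact hgs) (by rw [hcy']; exact hg's)
      rw [hcy, hcy'] at this
      exact hne this
    by_cases e1 : g₁ = s
    · exact key g₂ g₃ hg₂ hg₃ h23 (by rintro rfl; exact h12 e1) (by rintro rfl; exact h13 e1)
    · by_cases e2 : g₂ = s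
      · exact key g₁ g₃ hg₁ hg₃ h13 e1 (by rintro rfl; exact h23 e2)
      · exact key g₁ g₂ hg₁ hg₂ h12 e1 e2

open scoped Classical in
noncomputable def compZ (c : Sym2 α → C) (V : Finset α) (s : C) (x : α) : Finset α :=
  V.filter (fun z => Reach c V s x z)

def IsGP (c : Sym2 α → C) (V : Finset α) (P : Finset (Finset α)) (r1 r2 : C) : Prop :=
  (∀ p ∈ P, p ⊆ V) ∧ (∀ p ∈ P, p.Nonempty) ∧
  (∀ a ∈ V, ∃ p ∈ P, a ∈ p) ∧
  (∀ p ∈ P, ∀ q ∈ P, p ≠ q → Disjoint p q) ∧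
  (∀ p ∈ P, ∀ q ∈ P, p ≠ q → ∀ a ∈ p, ∀ b ∈ q, c s(a, b) = r1 ∨ c s(a, b) = r2) ∧
  2 ≤ P.card ∧ (3 ≤ P.card ∨ r1 = r2)

theorem GPS {c : Sym2 α → C} (hc : Gallai c) :
    ∀ V : Finset α, 2 ≤ V.card → ∃ P r1 r2, IsGP c V P r1 r2 := by
  intro V
  induction V using Finset.strongInduction with
  | _ V IH =>
    intro hV2
    by_cases hk : (Colors c V).card ≤ 2
    · -- few colors
      rcases eq_or_lt_of_le hV2 with hV2' | hV3
      · -- V.card = 2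
        obtain ⟨a, b, hab, rfl⟩ := Finset.card_eq_two.mp hV2'.symm
        refine ⟨{{a}, {b}}, c s(a, b), c s(a, b), ?_, ?_, ?_, ?_, ?_, ?_, ?_⟩
        · intro p hp
          rcases Finset.mem_insert.mp hp with rfl | hp
          · intro z hz; rw [Finset.mem_singleton] at hz; subst hz; simp
          · rw [Finset.mem_singleton] at hp; subst hp
            intro z hz; rw [Finset.mem_singleton] at hz; subst hz; simp
        · intro p hp
          rcases Finset.mem_insert.mp hp with rfl | hp
          · exact ⟨a, Finset.mem_singleton_self a⟩
          · rw [Finset.mem_singleton] at hp; subst hp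
            exact ⟨b, Finset.mem_singleton_self b⟩
        · intro z hz
          rcases Finset.mem_insert.mp hz with rfl | hz
          · exact ⟨{z}, Finset.mem_insert_self _ _, Finset.mem_singleton_self z⟩
          · rw [Finset.mem_singleton] at hz; subst hz
            exact ⟨{z}, Finset.mem_insert.mpr (Or.inr (Finset.mem_singleton_self _)),
              Finset.mem_singleton_self z⟩
        · intro p hp q hq hpq
          rcases Finset.mem_insert.mp hp with rfl | hp <;>
            rcases Finset.mem_insert.mp hq with h' | h'
          · exact absurd h'.symm hpq
          · rw [Finset.mem_singleton] at h'; subst h'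
            simp only [Finset.disjoint_singleton]
            first
            | exact hab
            | exact fun h => hab h.symm
          · subst h'
            rw [Finset.mem_singleton] at hp; subst hp
            simp only [Finset.disjoint_singleton]
            first
            | exact hab
            | exact fun h => hab h.symm
          · rw [Finset.mem_singleton] at hp h'; subst hp; subst h'
            exact absurd rfl hpq
        · intro p hp q hq hpq u hu w hw
          rcases Finset.mem_insert.mp hp with rfl | hp <;>
            rcases Finset.mem_insert.mp hq with h' | h'
          · exact absurd h'.symm hpq
          · rw [Finset.mem_singleton] at h'; subst h'
            rw [Finset.mem_singleton] at hu hw; subst hu; subst hw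
            exact Or.inl rfl
          · subst h'
            rw [Finset.mem_singleton] at hp; subst hp
            rw [Finset.mem_singleton] at hu hw; subst hu; subst hw
            exact Or.inl (by rw [Sym2.eq_swap])
          · rw [Finset.mem_singleton] at hp h'; subst hp; subst h'
            exact absurd rfl hpq
        · rw [Finset.card_insert_of_notMem (by simp [hab]), Finset.card_singleton]
        · exact Or.inr rfl
      · -- 3 ≤ V.card, singletons
        obtain ⟨a0, ha0, b0, hb0, hab0⟩ := Finset.one_lt_card.mp (by omega : 1 < V.card)
        have hc0 : c s(a0, b0) ∈ Colors c V := mem_Colors.mpr ⟨a0, b0, ha0, hb0, hab0, rfl⟩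
        -- get r1 r2 covering all colors
        obtain ⟨r1, r2, hr12⟩ : ∃ r1 r2, ∀ g ∈ Colors c V, g = r1 ∨ g = r2 := by
          by_cases h2 : ∃ r2 ∈ Colors c V, r2 ≠ c s(a0, b0)
          · obtain ⟨r2, hr2, hr2ne⟩ := h2
            refine ⟨c s(a0, b0), r2, ?_⟩
            intro g hg
            by_contra hcon
            push_neg at hcon
            have : 2 < (Colors c V).card := by
              apply Finset.two_lt_card_iff.mpr
              exact ⟨g, c s(a0, b0), r2, hg, hc0, hr2, hcon.1, hcon.2, hr2ne.symm⟩
            omega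
          · push_neg at h2
            exact ⟨c s(a0, b0), c s(a0, b0), fun g hg => Or.inl (h2 g hg)⟩
        refine ⟨V.image (fun a => {a}), r1, r2, ?_, ?_, ?_, ?_, ?_, ?_, ?_⟩
        · intro p hp
          obtain ⟨a, ha, rfl⟩ := Finset.mem_image.mp hp
          intro z hz; rw [Finset.mem_singleton] at hz; subst hz; exact ha
        · intro p hp
          obtain ⟨a, _, rfl⟩ := Finset.mem_image.mp hp
          exact ⟨a, Finset.mem_singleton_self a⟩
        · intro a ha
          exact ⟨{a}, Finset.mem_image_of_mem _ ha, Finset.mem_singleton_self a⟩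
        · intro p hp q hq hpq
          obtain ⟨a, _, rfl⟩ := Finset.mem_image.mp hp
          obtain ⟨b, _, rfl⟩ := Finset.mem_image.mp hq
          have hab2 : a ≠ b := fun h => hpq (by rw [h])
          simp only [Finset.disjoint_singleton]
          first
          | exact hab2
          | exact fun h => hab2 h.symm
        · intro p hp q hq hpq u hu w hw
          obtain ⟨a, ha, rfl⟩ := Finset.mem_image.mp hp
          obtain ⟨b, hb, rfl⟩ := Finset.mem_image.mp hq
          rw [Finset.mem_singleton] at hu hw; subst hu; subst hw
          have huw : u ≠ w := fun h => hpq (by rw [h])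
          exact hr12 _ (mem_Colors.mpr ⟨u, w, ha, hb, huw, rfl⟩)
        · rwa [Finset.card_image_of_injective _ (fun a b h => by
            simpa using Finset.singleton_injective h)] -- card = V.card ≥ 2
        · left
          rw [Finset.card_image_of_injective _ (fun a b h => by
            simpa using Finset.singleton_injective h)]
          omega
    · -- many colors : use claimD
      push_neg at hk
      have hnall : ¬ AllConn c V := fun h => absurd (claimD hc V h) (by omega)
      unfold AllConn at hnall
      push_neg at hnall
      obtain ⟨s, x, hxV, hincx, y₀, hy₀V, hbad⟩ := hnall
      classical
      set Z := compZ c V s x with hZdef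
      have hmemZ : ∀ z, z ∈ Z ↔ z ∈ V ∧ Reach c V s x z := by
        intro z; rw [hZdef]; unfold compZ; exact Finset.mem_filter
      have hZV : Z ⊆ V := fun z hz => ((hmemZ z).mp hz).1
      have hxZ : x ∈ Z := (hmemZ x).mpr ⟨hxV, Relation.ReflTransGen.refl⟩
      obtain ⟨x', hx'V, hx'x, hx'col⟩ := hincx
      have hx'Z : x' ∈ Z := (hmemZ x').mpr
        ⟨hx'V, Relation.ReflTransGen.single ⟨hxV, hx'V, Ne.symm hx'x, hx'col⟩⟩
      have hy₀Z : y₀ ∉ Z := fun h => hbad ((hmemZ y₀).mp h).2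
      have hy₀x : y₀ ≠ x := fun h => hy₀Z (h ▸ hxZ)
      set V'' := insert x (V \ Z) with hV''def
      have hV''V : V'' ⊆ V := by
        intro a ha
        rcases Finset.mem_insert.mp ha with rfl | ha
        · exact hxV
        · exact (Finset.mem_sdiff.mp ha).1
      have hV''ss : V'' ⊂ V := by
        refine ⟨hV''V, fun hsub => ?_⟩
        have := hsub hx'V
        rcases Finset.mem_insert.mp this with h | h
        · exact hx'x h
        · exact (Finset.mem_sdiff.mp h).2 hx'Z
      have hmemV'' : ∀ b, b ∈ V'' → b ≠ x → (b ∈ V ∧ b ∉ Z) := by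
        intro b hb hbx
        rcases Finset.mem_insert.mp hb with h | h
        · exact absurd h hbx
        · exact Finset.mem_sdiff.mp h
      have hy₀V'' : y₀ ∈ V'' := Finset.mem_insert.mpr (Or.inr (Finset.mem_sdiff.mpr ⟨hy₀V, hy₀Z⟩))
      have hV''2 : 2 ≤ V''.card := by
        exact Finset.one_lt_card.mpr ⟨x, Finset.mem_insert_self _ _, y₀, hy₀V'', fun h => hy₀x h.symm⟩
      obtain ⟨P'', r1, r2, hsub'', hne'', hcov'', hdisj'', hcross'', hcard'', hm''⟩ :=
        IH V'' hV''ss hV''2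
      obtain ⟨p₀, hp₀P, hxp₀⟩ := hcov'' x (Finset.mem_insert_self _ _)
      -- the key coloring fact
      have crossZ : ∀ z ∈ Z, ∀ b ∈ V, b ∉ Z → c s(z, b) = c s(x, b) := by
        intro z hz b hbV hbZ
        exact lemmaZ hc ((hmemZ z).mp hz).2 hbV (fun h => hbZ ((hmemZ b).mpr ⟨hbV, h⟩))
      set P := insert (p₀ ∪ Z) (P''.erase p₀) with hPdef
      have hql : ∀ q ∈ P''.erase p₀, q ∈ P'' ∧ q ≠ p₀ := by
        intro q hq
        exact ⟨Finset.mem_of_mem_erase hq, Finset.ne_of_mem_erase hq⟩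
      have hqx : ∀ q ∈ P''.erase p₀, ∀ b ∈ q, b ∈ V ∧ b ∉ Z := by
        intro q hq b hb
        obtain ⟨hqP, hqp₀⟩ := hql q hq
        have hbx : b ≠ x := by
          rintro rfl
          exact (Finset.disjoint_left.mp (hdisj'' q hqP p₀ hp₀P hqp₀) hb) hxp₀
        exact hmemV'' b (hsub'' q hqP hb) hbx
      have hcross1 : ∀ q ∈ P''.erase p₀, ∀ a ∈ p₀ ∪ Z, ∀ b ∈ q,
          c s(a, b) = r1 ∨ c s(a, b) = r2 := by
        intro q hq a ha b hb
        obtain ⟨hqP, hqp₀⟩ := hql q hq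
        obtain ⟨hbV, hbZ⟩ := hqx q hq b hb
        rcases Finset.mem_union.mp ha with ha | ha
        · exact hcross'' p₀ hp₀P q hqP (Ne.symm hqp₀) a ha b hb
        · rw [crossZ a ha b hbV hbZ]
          exact hcross'' p₀ hp₀P q hqP (Ne.symm hqp₀) x hxp₀ b hb
      have hnotmem : (p₀ ∪ Z) ∉ P''.erase p₀ := by
        intro h
        obtain ⟨hqP, hqp₀⟩ := hql _ h
        have : x ∈ p₀ ∪ Z := Finset.mem_union.mpr (Or.inl hxp₀)
        exact (Finset.disjoint_left.mp (hdisj'' _ hqP p₀ hp₀P hqp₀) this) hxp₀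
      have hPcard : P.card = P''.card := by
        rw [hPdef, Finset.card_insert_of_notMem hnotmem,
          Finset.card_erase_of_mem hp₀P]
        have : 1 ≤ P''.card := by omega
        omega
      refine ⟨P, r1, r2, ?_, ?_, ?_, ?_, ?_, ?_, ?_⟩
      · intro p hp
        rcases Finset.mem_insert.mp hp with rfl | hp
        · exact Finset.union_subset (fun a ha => hV''V (hsub'' p₀ hp₀P ha)) hZV
        · exact fun a ha => hV''V (hsub'' p ((hql p hp).1) ha)
      · intro p hp
        rcases Finset.mem_insert.mp hp with rfl | hp
        · exact ⟨x, Finset.mem_union.mpr (Or.inl hxp₀)⟩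
        · exact hne'' p ((hql p hp).1)
      · intro a ha
        by_cases haZ : a ∈ Z
        · exact ⟨p₀ ∪ Z, Finset.mem_insert_self _ _, Finset.mem_union.mpr (Or.inr haZ)⟩
        · obtain ⟨p, hpP, hap⟩ := hcov'' a (Finset.mem_insert.mpr
            (Or.inr (Finset.mem_sdiff.mpr ⟨ha, haZ⟩)))
          by_cases hpp₀ : p = p₀
          · exact ⟨p₀ ∪ Z, Finset.mem_insert_self _ _,
              Finset.mem_union.mpr (Or.inl (hpp₀ ▸ hap))⟩
          · exact ⟨p, Finset.mem_insert.mpr (Or.inr (Finset.mem_erase.mpr ⟨hpp₀, hpP⟩)), hap⟩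
      · intro p hp q hq hpq
        rcases Finset.mem_insert.mp hp with rfl | hp <;>
          rcases Finset.mem_insert.mp hq with hq' | hq'
        · exact absurd hq'.symm hpq
        · rw [Finset.disjoint_left]
          intro a ha haq
          obtain ⟨haV, haZ⟩ := hqx q hq' a haq
          rcases Finset.mem_union.mp ha with h | h
          · exact (Finset.disjoint_left.mp
              (hdisj'' p₀ hp₀P q (hql q hq').1 (Ne.symm (hql q hq').2)) h) haq
          · exact haZ h
        · subst hq'
          rw [Finset.disjoint_left]
          intro a hap haq
          obtain ⟨haV, haZ⟩ := hqx p hp a hap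
          rcases Finset.mem_union.mp haq with h | h
          · exact (Finset.disjoint_left.mp
              (hdisj'' p (hql p hp).1 p₀ hp₀P (hql p hp).2) hap) h
          · exact haZ h
        · exact hdisj'' p (hql p hp).1 q (hql q hq').1
            (fun h => hpq h)
      · intro p hp q hq hpq a ha b hb
        rcases Finset.mem_insert.mp hp with rfl | hp <;>
          rcases Finset.mem_insert.mp hq with hq' | hq'
        · exact absurd hq'.symm hpq
        · exact hcross1 q hq' a ha b hb
        · subst hq'
          have := hcross1 p hp b hb a ha
          rwa [Sym2.eq_swap] at this
        · exact hcross'' p (hql p hp).1 q (hql q hq').1 (fun h => hpq h) a ha b hb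
      · omega
      · rcases hm'' with h | h
        · left; omega
        · right; exact h

def uncov (c : Sym2 α → C) (V : Finset α) (S : Finset C) : ℕ :=
  (V.sym2.filter (fun e => ¬ e.IsDiag ∧ c e ∉ S)).card

lemma edgecount (V : Finset α) : (V.sym2.filter (fun e => ¬ e.IsDiag)).card = V.card.choose 2 := by
  rw [← Sym2.card_image_offDiag]
  congr 1
  ext e
  simp only [Finset.mem_filter, Finset.mem_image, Finset.mem_offDiag]
  constructor
  · rintro ⟨he, hnd⟩
    revert hnd
    revert he
    induction e using Sym2.ind with
    | _ a b =>
      intro he hnd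
      rw [Finset.mk_mem_sym2_iff] at he
      exact ⟨(a, b), ⟨he.1, he.2, by simpa using hnd⟩, rfl⟩
  · rintro ⟨⟨a, b⟩, ⟨ha, hb, hab⟩, rfl⟩
    exact ⟨Finset.mk_mem_sym2_iff.mpr ⟨ha, hb⟩, by simpa using hab⟩

lemma uncov_mono {c : Sym2 α → C} {V : Finset α} {S T : Finset C} (h : S ⊆ T) :
    uncov c V T ≤ uncov c V S := by
  apply Finset.card_le_card
  intro e he
  rw [Finset.mem_filter] at he ⊢
  exact ⟨he.1, he.2.1, fun hmem => he.2.2 (h hmem)⟩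

lemma uncov_le_total {c : Sym2 α → C} (V : Finset α) (S : Finset C) :
    uncov c V S ≤ V.card.choose 2 := by
  rw [← edgecount V]
  apply Finset.card_le_card
  intro e he
  rw [Finset.mem_filter] at he ⊢
  exact ⟨he.1, he.2.1⟩

lemma uncov_empty {c : Sym2 α → C} (V : Finset α) :
    uncov c V (∅ : Finset C) = V.card.choose 2 := by
  rw [← edgecount V]
  unfold uncov
  congr 1
  apply Finset.filter_congr
  intro e _
  simp

lemma uncov_split {c : Sym2 α → C} {V : Finset α} {P : Finset (Finset α)} {S : Finset C}
    (hcov : ∀ a ∈ V, ∃ p ∈ P, a ∈ p)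
    (hcross : ∀ p ∈ P, ∀ q ∈ P, p ≠ q → ∀ a ∈ p, ∀ b ∈ q, c s(a, b) ∈ S) :
    uncov c V S ≤ ∑ p ∈ P, uncov c p S := by
  unfold uncov
  calc (V.sym2.filter (fun e => ¬ e.IsDiag ∧ c e ∉ S)).card
      ≤ (P.biUnion (fun p => p.sym2.filter (fun e => ¬ e.IsDiag ∧ c e ∉ S))).card := by
        apply Finset.card_le_card
        intro e he
        rw [Finset.mem_filter] at he
        obtain ⟨heV, hprop⟩ := he
        rw [Finset.mem_biUnion]
        revert hprop
        revert heV
        induction e using Sym2.ind with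
        | _ a b =>
          intro heV hprop
          obtain ⟨hnd, hcS⟩ := hprop
          rw [Finset.mk_mem_sym2_iff] at heV
          obtain ⟨p, hpP, hap⟩ := hcov a heV.1
          obtain ⟨q, hqP, hbq⟩ := hcov b heV.2
          have hpq : p = q := by
            by_contra hne
            exact hcS (hcross p hpP q hqP hne a hap b hbq)
          refine ⟨p, hpP, ?_⟩
          rw [Finset.mem_filter, Finset.mk_mem_sym2_iff]
          exact ⟨⟨hap, hpq ▸ hbq⟩, hnd, hcS⟩
    _ ≤ ∑ p ∈ P, (p.sym2.filter (fun e => ¬ e.IsDiag ∧ c e ∉ S)).card :=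
        Finset.card_biUnion_le

lemma alloc {c : Sym2 α → C} :
    ∀ (P : Finset (Finset α)), (∀ p ∈ P, p.Nonempty) →
    (∀ p ∈ P, ∀ ℓ', ∃ S : Finset C, S.card ≤ ℓ' ∧ uncov c p S ≤ (p.card - ℓ').choose 2) →
    ∀ B, B ≤ ∑ p ∈ P, (p.card - 1) →
    ∃ S : Finset C, S.card ≤ B ∧
      ∑ p ∈ P, uncov c p S ≤ ((∑ p ∈ P, p.card) - B - (P.card - 1)).choose 2 := by
  intro P
  induction P using Finset.induction_on with
  | empty =>
    intro _ _ B hB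
    simp at hB
    subst hB
    exact ⟨∅, le_refl _, by simp⟩
  | @insert p P hp IHP =>
    intro hne hcnt B hB
    have hpne : p.Nonempty := hne p (Finset.mem_insert_self _ _)
    have hp1 : 1 ≤ p.card := Finset.card_pos.mpr hpne
    rw [Finset.sum_insert hp] at hB
    set ℓp := min B (p.card - 1) with hℓp
    obtain ⟨Sp, hSp1, hSp2⟩ := hcnt p (Finset.mem_insert_self _ _) ℓp
    have hB' : B - ℓp ≤ ∑ q ∈ P, (q.card - 1) := by omega
    obtain ⟨S', hS'1, hS'2⟩ := IHP (fun q hq => hne q (Finset.mem_insert_of_mem hq))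
      (fun q hq => hcnt q (Finset.mem_insert_of_mem hq)) (B - ℓp) hB'
    refine ⟨Sp ∪ S', ?_, ?_⟩
    · calc (Sp ∪ S').card ≤ Sp.card + S'.card := Finset.card_union_le _ _
        _ ≤ ℓp + (B - ℓp) := by omega
        _ ≤ B := by omega
    · rw [Finset.sum_insert hp]
      have h1 : uncov c p (Sp ∪ S') ≤ (p.card - ℓp).choose 2 :=
        le_trans (uncov_mono Finset.subset_union_left) hSp2
      have h2 : ∑ q ∈ P, uncov c q (Sp ∪ S') ≤
          ((∑ q ∈ P, q.card) - (B - ℓp) - (P.card - 1)).choose 2 :=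
        le_trans (Finset.sum_le_sum (fun q _ => uncov_mono Finset.subset_union_right)) hS'2
      rcases P.eq_empty_or_nonempty with rfl | hPne
      · have e0 : ∑ q ∈ insert p (∅ : Finset (Finset α)), q.card = p.card := by simp
        have e1 : (insert p (∅ : Finset (Finset α))).card = 1 := by simp
        rw [e0, e1]
        simp only [Finset.sum_empty] at hB
        have e2 : p.card - B - (1 - 1) = p.card - ℓp := by omega
        rw [e2]
        have e3 : ∑ x ∈ (∅ : Finset (Finset α)), uncov c x (Sp ∪ S') = 0 := by simp
        omega
      · have hPcard : 1 ≤ P.card := Finset.card_pos.mpr hPne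
        have hSm : P.card ≤ ∑ q ∈ P, q.card := by
          have h0 : ∑ q ∈ P, (1:ℕ) ≤ ∑ q ∈ P, q.card := Finset.sum_le_sum
            (fun q hq => Finset.card_pos.mpr (hne q (Finset.mem_insert_of_mem hq)))
          have h0' : ∑ q ∈ P, (1:ℕ) = P.card := by
            rw [Finset.sum_const, smul_eq_mul, mul_one]
          omega
        have hSsub : ∑ q ∈ P, (q.card - 1) + P.card = ∑ q ∈ P, q.card := by
          have h1 : ∑ q ∈ P, (q.card - 1) + P.card = ∑ q ∈ P, ((q.card - 1) + 1) := by
            rw [Finset.sum_add_distrib, Finset.sum_const, smul_eq_mul, mul_one]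
          rw [h1]
          apply Finset.sum_congr rfl
          intro q hq
          have : 1 ≤ q.card := Finset.card_pos.mpr (hne q (Finset.mem_insert_of_mem hq))
          omega
        have ha1 : 1 ≤ p.card - ℓp := by omega
        have ha2 : 1 ≤ (∑ q ∈ P, q.card) - (B - ℓp) - (P.card - 1) := by omega
        have hmerge := merge_choose _ _ ha1 ha2
        rw [Finset.sum_insert hp, Finset.card_insert_of_notMem hp]
        have e : (p.card - ℓp) + ((∑ q ∈ P, q.card) - (B - ℓp) - (P.card - 1)) - 1
            = p.card + (∑ q ∈ P, q.card) - B - (P.card + 1 - 1) := by omega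
        rw [e] at hmerge
        omega

theorem CNT {c : Sym2 α → C} (hc : Gallai c) :
    ∀ V : Finset α, ∀ ℓ : ℕ, ∃ S : Finset C, S.card ≤ ℓ ∧
      uncov c V S ≤ (V.card - ℓ).choose 2 := by
  intro V
  induction V using Finset.strongInduction with
  | _ V IH =>
    rcases le_or_gt V.card 1 with hsmall | hbig
    · intro ℓ
      refine ⟨∅, by simp, ?_⟩
      have h1 := uncov_le_total (c := c) V ∅
      have h2 : V.card.choose 2 = 0 := by
        rcases Nat.le_one_iff_eq_zero_or_eq_one.mp hsmall with h | h <;> rw [h] <;> rfl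
      have h3 := uncov_mono (c := c) (V := V) (Finset.empty_subset ∅)
      omega
    · have key : ∀ ℓ', ℓ' ≤ V.card - 1 →
          ∃ S : Finset C, S.card ≤ ℓ' ∧ uncov c V S ≤ (V.card - ℓ').choose 2 := by
        intro ℓ' hℓ'
        rcases Nat.eq_zero_or_pos ℓ' with rfl | hpos
        · refine ⟨∅, by simp, ?_⟩
          rw [uncov_empty]
          simp
        obtain ⟨P, r1, r2, hsub, hne, hcov, hdisj, hcross, hm2, hm3⟩ := GPS hc V (by omega)
        have hsum : ∑ p ∈ P, p.card = V.card := by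
          have hUnion : P.biUnion id = V := by
            ext a
            simp only [Finset.mem_biUnion, id]
            constructor
            · rintro ⟨p, hp, hap⟩; exact hsub p hp hap
            · intro ha; exact hcov a ha
          rw [← hUnion]
          exact (Finset.card_biUnion (fun p hp q hq hpq => hdisj p hp q hq hpq)).symm
        have hproper : ∀ p ∈ P, p ⊂ V := by
          intro p hp
          obtain ⟨q, hq, hqp⟩ := Finset.exists_mem_ne (s := P) (by omega) p
          obtain ⟨y, hy⟩ := hne q hq
          refine ⟨hsub p hp, fun hVp => ?_⟩
          have hyp : y ∈ p := hVp (hsub q hq hy)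
          exact (Finset.disjoint_left.mp (hdisj q hq p hp hqp) hy) hyp
        have hparts : ∀ p ∈ P, ∀ ℓ'', ∃ S : Finset C, S.card ≤ ℓ'' ∧
            uncov c p S ≤ (p.card - ℓ'').choose 2 :=
          fun p hp => IH p (hproper p hp)
        have hsubsum : ∑ p ∈ P, (p.card - 1) = V.card - P.card := by
          have h1 : ∑ p ∈ P, (p.card - 1) + P.card = ∑ p ∈ P, p.card := by
            have h2 : ∑ p ∈ P, (p.card - 1) + P.card = ∑ p ∈ P, ((p.card - 1) + 1) := by
              rw [Finset.sum_add_distrib, Finset.sum_const, smul_eq_mul, mul_one]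
            rw [h2]
            exact Finset.sum_congr rfl (fun p hp => by
              have := Finset.card_pos.mpr (hne p hp); omega)
          omega
        have hmn : P.card ≤ V.card := by
          have h0 : ∑ p ∈ P, (1:ℕ) ≤ ∑ p ∈ P, p.card :=
            Finset.sum_le_sum (fun p hp => Finset.card_pos.mpr (hne p hp))
          have h0' : ∑ p ∈ P, (1:ℕ) = P.card := by
            rw [Finset.sum_const, smul_eq_mul, mul_one]
          omega
        by_cases hmono : r1 = r2
        · -- one cross color
          set B := min (ℓ' - 1) (V.card - P.card) with hB
          obtain ⟨S₀, hS₀1, hS₀2⟩ := alloc P hne hparts B (by omega)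
          refine ⟨insert r1 S₀, ?_, ?_⟩
          · calc (insert r1 S₀).card ≤ S₀.card + 1 := Finset.card_insert_le _ _
              _ ≤ ℓ' := by omega
          · have hsplit : uncov c V (insert r1 S₀) ≤ ∑ p ∈ P, uncov c p (insert r1 S₀) := by
              apply uncov_split hcov
              intro p hp q hq hpq a ha b hb
              rcases hcross p hp q hq hpq a ha b hb with h | h
              · rw [h]; exact Finset.mem_insert_self _ _
              · rw [h, ← hmono]; exact Finset.mem_insert_self _ _
            have hmon : ∑ p ∈ P, uncov c p (insert r1 S₀) ≤ ∑ p ∈ P, uncov c p S₀ :=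
              Finset.sum_le_sum (fun p _ => uncov_mono (Finset.subset_insert _ _))
            have hfin : ((∑ p ∈ P, p.card) - B - (P.card - 1)).choose 2 ≤
                (V.card - ℓ').choose 2 := by
              rw [hsum]
              rcases le_or_gt (ℓ' - 1) (V.card - P.card) with hcase | hcase
              · exact Nat.choose_le_choose 2 (by omega)
              · have e : V.card - B - (P.card - 1) = 1 := by omega
                rw [e]
                calc (1:ℕ).choose 2 = 0 := rfl
                  _ ≤ _ := Nat.zero_le _
            omega
        · have hm3' : 3 ≤ P.card := by
            rcases hm3 with h | h
            · exact h
            · exact absurd h hmono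
          rcases Nat.lt_or_ge ℓ' 2 with hl1 | hl2
          · -- ℓ' = 1 : majority cross color
            have hℓ'1 : ℓ' = 1 := by omega
            subst hℓ'1
            classical
            set base := V.sym2.filter (fun e => ¬ e.IsDiag) with hbase
            have hbasecard : base.card = V.card.choose 2 := edgecount V
            set inPred := (fun e : Sym2 α => ∃ p ∈ P, e ∈ p.sym2) with hinPred
            have hcross_sub : base.filter (fun e => ¬ inPred e) ⊆
                base.filter (fun e => c e = r1) ∪ base.filter (fun e => c e = r2) := by
              intro e he
              rw [Finset.mem_filter] at he
              obtain ⟨hebase, hecross⟩ := he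
              have hebase' := hebase
              rw [hbase, Finset.mem_filter] at hebase'
              obtain ⟨heV, hend⟩ := hebase'
              rw [Finset.mem_union]
              revert hend
              revert hecross
              revert heV
              induction e using Sym2.ind with
              | _ a b =>
                intro heV hecross hend
                rw [Finset.mk_mem_sym2_iff] at heV
                obtain ⟨pa, hpa, hapa⟩ := hcov a heV.1
                obtain ⟨pb, hpb, hbpb⟩ := hcov b heV.2
                have hpab : pa ≠ pb := by
                  rintro rfl
                  exact hecross ⟨pa, hpa, Finset.mk_mem_sym2_iff.mpr ⟨hapa, hbpb⟩⟩
                rcases hcross pa hpa pb hpb hpab a hapa b hbpb with h | h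
                · exact Or.inl (Finset.mem_filter.mpr ⟨hebase, h⟩)
                · exact Or.inr (Finset.mem_filter.mpr ⟨hebase, h⟩)
            have hinside : base.filter (fun e => inPred e) ⊆
                P.biUnion (fun p => p.sym2.filter (fun e => ¬ e.IsDiag)) := by
              intro e he
              rw [Finset.mem_filter] at he
              obtain ⟨hebase, p, hp, hep⟩ := he
              rw [Finset.mem_biUnion]
              refine ⟨p, hp, ?_⟩
              rw [Finset.mem_filter]
              rw [hbase, Finset.mem_filter] at hebase
              exact ⟨hep, hebase.2⟩
            have hinside_card : (base.filter (fun e => inPred e)).card ≤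
                ∑ p ∈ P, p.card.choose 2 := by
              calc (base.filter (fun e => inPred e)).card
                  ≤ (P.biUnion (fun p => p.sym2.filter (fun e => ¬ e.IsDiag))).card :=
                    Finset.card_le_card hinside
                _ ≤ ∑ p ∈ P, (p.sym2.filter (fun e => ¬ e.IsDiag)).card :=
                    Finset.card_biUnion_le
                _ = ∑ p ∈ P, p.card.choose 2 :=
                    Finset.sum_congr rfl (fun p _ => edgecount p)
            have hsumparts : ∑ p ∈ P, p.card.choose 2 ≤ (V.card - P.card + 1).choose 2 := by
              obtain ⟨S₀, hS₀1, hS₀2⟩ := alloc P hne hparts 0 (Nat.zero_le _)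
              have hS₀empty : S₀ = ∅ := Finset.card_eq_zero.mp (by omega)
              subst hS₀empty
              have e1 : ∑ p ∈ P, uncov c p (∅ : Finset C) = ∑ p ∈ P, p.card.choose 2 :=
                Finset.sum_congr rfl (fun p _ => uncov_empty p)
              rw [e1] at hS₀2
              have e2 : (∑ p ∈ P, p.card) - 0 - (P.card - 1) = V.card - P.card + 1 := by
                rw [hsum]; omega
              rwa [e2] at hS₀2
            have hid1 : V.card.choose 2 = (V.card - 1).choose 2 + (V.card - 1) := by
              have e1 : V.card - 1 + 1 = V.card := by omega
              have h1 := choose_succ_two (V.card - 1)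
              rw [e1] at h1
              omega
            have hid2 : (V.card - 1).choose 2 = (V.card - 2).choose 2 + (V.card - 2) := by
              have e2 : V.card - 2 + 1 = V.card - 1 := by omega
              have h2 := choose_succ_two (V.card - 2)
              rw [e2] at h2
              omega
            have hmonochoose : (V.card - P.card + 1).choose 2 ≤ (V.card - 2).choose 2 :=
              Nat.choose_le_choose 2 (by omega)
            have hbase_split : (base.filter (fun e => inPred e)).card +
                (base.filter (fun e => ¬ inPred e)).card = base.card :=
              Finset.card_filter_add_card_filter_not (p := inPred)
            have hcross_card : (base.filter (fun e => ¬ inPred e)).card ≤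
                (base.filter (fun e => c e = r1)).card + (base.filter (fun e => c e = r2)).card := by
              calc (base.filter (fun e => ¬ inPred e)).card
                  ≤ (base.filter (fun e => c e = r1) ∪ base.filter (fun e => c e = r2)).card :=
                    Finset.card_le_card hcross_sub
                _ ≤ _ := Finset.card_union_le _ _
            -- now pick the majority color
            have hmaj : V.card - 1 ≤ (base.filter (fun e => c e = r1)).card ∨
                V.card - 1 ≤ (base.filter (fun e => c e = r2)).card := by
              omega
            have main : ∀ r : C, V.card - 1 ≤ (base.filter (fun e => c e = r)).card →
                ∃ S : Finset C, S.card ≤ 1 ∧ uncov c V S ≤ (V.card - 1).choose 2 := by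
              intro r hr
              refine ⟨{r}, by simp, ?_⟩
              have huneq : uncov c V {r} = (base.filter (fun e => ¬ (c e = r))).card := by
                unfold uncov
                rw [hbase, Finset.filter_filter]
                congr 1
                apply Finset.filter_congr
                intro e _
                simp
              have hsplit2 : (base.filter (fun e => c e = r)).card +
                  (base.filter (fun e => ¬ (c e = r))).card = base.card :=
                Finset.card_filter_add_card_filter_not (p := fun e => c e = r)
              omega
            rcases hmaj with h | h
            · exact main r1 h
            · exact main r2 h
          · -- two cross colors, ℓ' ≥ 2
            set B := min (ℓ' - 2) (V.card - P.card) with hB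
            obtain ⟨S₀, hS₀1, hS₀2⟩ := alloc P hne hparts B (by omega)
            refine ⟨insert r1 (insert r2 S₀), ?_, ?_⟩
            · calc (insert r1 (insert r2 S₀)).card ≤ (insert r2 S₀).card + 1 :=
                  Finset.card_insert_le _ _
                _ ≤ (S₀.card + 1) + 1 := by
                  have := Finset.card_insert_le r2 S₀; omega
                _ ≤ ℓ' := by omega
            · have hsplit : uncov c V (insert r1 (insert r2 S₀)) ≤
                  ∑ p ∈ P, uncov c p (insert r1 (insert r2 S₀)) := by
                apply uncov_split hcov
                intro p hp q hq hpq a ha b hb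
                rcases hcross p hp q hq hpq a ha b hb with h | h
                · rw [h]; exact Finset.mem_insert_self _ _
                · rw [h]; exact Finset.mem_insert_of_mem (Finset.mem_insert_self _ _)
              have hmon : ∑ p ∈ P, uncov c p (insert r1 (insert r2 S₀)) ≤
                  ∑ p ∈ P, uncov c p S₀ :=
                Finset.sum_le_sum (fun p _ => uncov_mono
                  (le_trans (Finset.subset_insert _ _) (Finset.subset_insert _ _)))
              have hfin : ((∑ p ∈ P, p.card) - B - (P.card - 1)).choose 2 ≤
                  (V.card - ℓ').choose 2 := by
                rw [hsum]
                rcases le_or_gt (ℓ' - 2) (V.card - P.card) with hcase | hcase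
                · exact Nat.choose_le_choose 2 (by omega)
                · have e : V.card - B - (P.card - 1) = 1 := by omega
                  rw [e]
                  calc (1:ℕ).choose 2 = 0 := rfl
                    _ ≤ _ := Nat.zero_le _
              omega
      intro ℓ
      obtain ⟨S, hS1, hS2⟩ := key (min ℓ (V.card - 1)) (min_le_right _ _)
      refine ⟨S, le_trans hS1 (min_le_left _ _), ?_⟩
      rcases le_or_gt ℓ (V.card - 1) with h | h
      · rwa [min_eq_left h] at hS2
      · rw [min_eq_right (by omega)] at hS2
        have e1 : V.card - (V.card - 1) = 1 := by omega
        rw [e1] at hS2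
        have e2 : (1:ℕ).choose 2 = 0 := rfl
        omega

end Defs

/-- In every Gallai coloring of `K_n` there exist at most `ℓ` colors such that at least
`(n-1)+(n-2)+⋯+(n-ℓ)` edges are colored with these colors. -/
theorem gallai_few_colors_many_edges (n ℓ : ℕ) (hn : 1 ≤ n) (hℓ : 1 ≤ ℓ)
    {C : Type*} [DecidableEq C] (c : Sym2 (Fin n) → C) (hc : IsGallai c) :
    ∃ S : Finset C, S.card ≤ ℓ ∧
      ∑ j ∈ Finset.range ℓ, (n - 1 - j) ≤
        (Finset.univ.filter (fun e : Sym2 (Fin n) => ¬ e.IsDiag ∧ c e ∈ S)).card := by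
  have hG : Gallai c := hc
  obtain ⟨S, hS1, hS2⟩ := CNT hG (Finset.univ : Finset (Fin n)) ℓ
  refine ⟨S, hS1, ?_⟩
  have hcardV : (Finset.univ : Finset (Fin n)).card = n := by simp
  have hsym2univ : (Finset.univ : Finset (Fin n)).sym2 = (Finset.univ : Finset (Sym2 (Fin n))) := by
    ext e
    simp [Finset.mem_sym2_iff]
  have huncov : uncov c Finset.univ S =
      (Finset.univ.filter (fun e : Sym2 (Fin n) => ¬ e.IsDiag ∧ c e ∉ S)).card := by
    unfold uncov
    rw [hsym2univ]
  have htotal : (Finset.univ.filter (fun e : Sym2 (Fin n) => ¬ e.IsDiag)).card = n.choose 2 := by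
    have h := edgecount (Finset.univ : Finset (Fin n))
    rw [hsym2univ, hcardV] at h
    exact h
  have hsplitc : (Finset.univ.filter (fun e : Sym2 (Fin n) => ¬ e.IsDiag ∧ c e ∈ S)).card
      + (Finset.univ.filter (fun e : Sym2 (Fin n) => ¬ e.IsDiag ∧ c e ∉ S)).card
      = (Finset.univ.filter (fun e : Sym2 (Fin n) => ¬ e.IsDiag)).card := by
    rw [← Finset.filter_filter, ← Finset.filter_filter]
    exact Finset.card_filter_add_card_filter_not (p := fun e => c e ∈ S)
  have hsum := sum_range_le n ℓ
  rw [hcardV] at hS2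
  rw [huncov] at hS2
  omega
end

section
/- Suppose e_1 ≥ e_2 ≥ ... ≥ e_k are nonnegative integers with e_1 + ... + e_k = n(n-1)/2, and K_n admits a Gallai k-coloring with exactly e_i edges of color i for each i. Then for every 1 ≤ ℓ ≤ k, the partial sum e_1 + ... + e_ℓ is at least (n-1) + (n-2) + ... + (n-ℓ). -/
open Finset

namespace Gallai

lemma succ_choose_two (m : ℕ) : (m + 1).choose 2 = m + m.choose 2 := by
  rw [Nat.choose_succ_succ', Nat.choose_one_right]

lemma choose_two_add_choose_two_le {p q : ℕ} (hp : 1 ≤ p) (hq : 1 ≤ q) :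
    p.choose 2 + q.choose 2 ≤ (p + q - 1).choose 2 := by
  obtain ⟨a, rfl⟩ := Nat.exists_eq_add_of_le' hp
  obtain ⟨b, rfl⟩ := Nat.exists_eq_add_of_le' hq
  rw [show a + 1 + (b + 1) - 1 = a + b + 1 by omega]
  induction b with
  | zero => simp
  | succ b ih =>
    rw [show a + (b + 1) + 1 = a + b + 1 + 1 by omega, succ_choose_two (a + b + 1),
      succ_choose_two (b + 1)]
    omega

lemma sum_range_sub_add_choose_two (n ℓ : ℕ) :
    ∑ j ∈ range ℓ, (n - 1 - j) + (n - ℓ).choose 2 = n.choose 2 := by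
  induction ℓ with
  | zero => simp
  | succ ℓ ih =>
    rw [sum_range_succ, ← ih]
    obtain h | h := le_or_gt n ℓ
    · simp [Nat.sub_eq_zero_of_le h, Nat.sub_eq_zero_of_le (h.trans ℓ.le_succ),
        show n - 1 - ℓ = 0 by omega]
    · obtain ⟨m, hm⟩ : ∃ m, n - ℓ = m + 1 := ⟨n - ℓ - 1, by omega⟩
      rw [hm, succ_choose_two, show n - (ℓ + 1) = m by omega, show n - 1 - ℓ = m by omega]
      ring

lemma exists_budget_sum_choose_two_le {ι : Type*} [DecidableEq ι] (P : Finset ι) (sz : ι → ℕ)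
    (hsz : ∀ i ∈ P, 1 ≤ sz i) (m : ℕ) :
    ∃ b : ι → ℕ, ∑ i ∈ P, b i ≤ m ∧
      ∑ i ∈ P, (sz i - b i).choose 2 ≤ (∑ i ∈ P, sz i + 1 - #P - m).choose 2 := by
  induction P using Finset.induction_on generalizing m with
  | empty => exact ⟨0, by simp, by simp⟩
  | insert a P ha ih =>
    have hszP : ∀ i ∈ P, 1 ≤ sz i := fun i hi => hsz i (mem_insert_of_mem hi)
    have hsza : 1 ≤ sz a := hsz a (mem_insert_self a P)
    have hcard : #P ≤ ∑ i ∈ P, sz i := card_eq_sum_ones P ▸ sum_le_sum hszP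
    have hupd (b : ι → ℕ) (y : ℕ) (f : ℕ → ℕ → ℕ) :
        ∑ i ∈ P, f (sz i) (Function.update b a y i) = ∑ i ∈ P, f (sz i) (b i) :=
      sum_congr rfl fun i hi => by rw [Function.update_of_ne (ne_of_mem_of_not_mem hi ha)]
    simp only [sum_insert ha, card_insert_of_notMem ha]
    -- spend `sz a - 1` on `a` if the budget allows it, else spend everything on `a`
    obtain hm | hm := le_or_gt (sz a - 1) m
    · obtain ⟨b, hb, hb'⟩ := ih hszP (m - (sz a - 1))
      refine ⟨Function.update b a (sz a - 1), ?_, ?_⟩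
      · have := hupd b (sz a - 1) fun _ y => y
        simp only [Function.update_self] at this ⊢
        omega
      · have := hupd b (sz a - 1) fun s y => (s - y).choose 2
        simp only [Function.update_self] at this ⊢
        rw [this, show sz a - (sz a - 1) = 1 by omega, show Nat.choose 1 2 = 0 by rfl, zero_add]
        exact hb'.trans (Nat.choose_le_choose 2 (by omega))
    · obtain ⟨b, hb, hb'⟩ := ih hszP 0
      refine ⟨Function.update b a m, ?_, ?_⟩
      · have := hupd b m fun _ y => y
        simp only [Function.update_self] at this ⊢
        omega
      · have := hupd b m fun s y => (s - y).choose 2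
        simp only [Function.update_self] at this ⊢
        rw [this]
        calc (sz a - m).choose 2 + ∑ i ∈ P, (sz i - b i).choose 2
            ≤ (sz a - m).choose 2 + (∑ i ∈ P, sz i + 1 - #P).choose 2 := by
              gcongr
              simpa using hb'
          _ ≤ (sz a - m + (∑ i ∈ P, sz i + 1 - #P) - 1).choose 2 :=
              choose_two_add_choose_two_le (by omega) (by omega)
          _ = _ := by congr 1; omega

lemma sum_le_sum_range_card {k : ℕ} {e : ℕ → ℕ} (he : AntitoneOn e (Set.Iio k))
    (S : Finset ℕ) (hS : ∀ i ∈ S, i < k) : ∑ i ∈ S, e i ≤ ∑ j ∈ range #S, e j := by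
  induction S using Finset.induction_on_max with
  | empty => simp
  | insert a S hlt ih =>
    have haS : a ∉ S := fun h => (hlt a h).false
    have hcard : #S ≤ a := by simpa using card_le_card fun x hx => mem_range.2 (hlt x hx)
    rw [sum_insert haS, card_insert_of_notMem haS, sum_range_succ, add_comm]
    have hak : a < k := hS a (mem_insert_self a S)
    exact add_le_add (ih fun i hi => hS i (mem_insert_of_mem hi))
      (he (hcard.trans_lt hak) hak hcard)

lemma card_sym2_filter_not_isDiag {α : Type*} [DecidableEq α] (s : Finset α) :
    #{e ∈ s.sym2 | ¬e.IsDiag} = (#s).choose 2 := by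
  rw [← Sym2.card_image_offDiag]
  congr 1
  ext e
  induction e using Sym2.ind
  simp only [mem_filter, mk_mem_sym2_iff, Sym2.mk_isDiag_iff, mem_image, mem_offDiag,
    Prod.exists, Function.uncurry_apply_pair, Sym2.eq_iff]
  grind

variable {n : ℕ} {C : Type*} {c : Sym2 (Fin n) → C} {W : Finset (Fin n)} {x : C}
  {a b u v w : Fin n}

def ColorAdj (c : Sym2 (Fin n) → C) (W : Finset (Fin n)) (x : C) (a b : Fin n) : Prop :=
  a ∈ W ∧ b ∈ W ∧ a ≠ b ∧ c s(a, b) = x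

abbrev ColorReach (c : Sym2 (Fin n) → C) (W : Finset (Fin n)) (x : C) : Fin n → Fin n → Prop :=
  Relation.ReflTransGen (ColorAdj c W x)

def ColorConnected (c : Sym2 (Fin n) → C) (W : Finset (Fin n)) (x : C) : Prop :=
  ∀ a ∈ W, ∀ b ∈ W, ColorReach c W x a b

lemma color_comm (c : Sym2 (Fin n) → C) (a b : Fin n) : c s(a, b) = c s(b, a) :=
  congrArg c Sym2.eq_swap

lemma ColorAdj.symm (h : ColorAdj c W x a b) : ColorAdj c W x b a :=
  ⟨h.2.1, h.1, h.2.2.1.symm, color_comm c b a ▸ h.2.2.2⟩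

lemma ColorReach.symm (h : ColorReach c W x a b) : ColorReach c W x b a := by
  induction h with
  | refl => rfl
  | tail _ hpq ih => exact .head hpq.symm ih

lemma ColorReach.mem (ha : a ∈ W) (h : ColorReach c W x a b) : b ∈ W := by
  induction h with
  | refl => exact ha
  | tail _ hpq _ => exact hpq.2.1

lemma ColorReach.mono {W' : Finset (Fin n)} (hW : W ⊆ W') (h : ColorReach c W x a b) :
    ColorReach c W' x a b :=
  Relation.ReflTransGen.mono (fun _ _ hpq => ⟨hW hpq.1, hW hpq.2.1, hpq.2.2⟩) _ _ h

lemma ColorReach.closed {A : Fin n → Prop} (hA : ∀ p q, ColorAdj c W x p q → A p → A q)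
    (h : ColorReach c W x a b) (ha : A a) : A b := by
  induction h with
  | refl => exact ha
  | tail _ hpq ih => exact hA _ _ hpq ih

lemma color_eq_of_colorReach (hc : IsGallai c)
    (hv : ∀ p, ColorReach c W x u p → v ≠ p ∧ c s(v, p) ≠ x) (h : ColorReach c W x u w) :
    c s(v, w) = c s(v, u) := by
  induction h with
  | refl => rfl
  | @tail p q hup hpq ih =>
    obtain ⟨hvp, hvpx⟩ := hv p hup
    obtain ⟨hvq, hvqx⟩ := hv q (hup.tail hpq)
    rcases hc v p q hvp hpq.2.2.1 hvq with h | h | h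
    · exact absurd (h.trans hpq.2.2.2) hvpx
    · exact absurd (h.symm.trans hpq.2.2.2) hvqx
    · exact h.symm.trans ih

lemma color_eq_of_not_colorReach (hc : IsGallai c) (hu : u ∈ W) (hw : w ∈ W)
    (hnr : ¬ColorReach c W x u w) (h : ColorReach c W x u v) : c s(w, v) = c s(w, u) := by
  refine color_eq_of_colorReach hc (fun p hup => ⟨?_, fun hx => hnr ?_⟩) h
  · rintro rfl; exact hnr hup
  · refine hup.tail ⟨hup.mem hu, hw, ?_, color_comm c p w ▸ hx⟩
    rintro rfl; exact hnr hup

lemma not_colorConnected_of_isolated (ha : a ∈ W) (hb : b ∈ W) (hab : a ≠ b)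
    (hiso : ∀ w ∈ W, w ≠ b → c s(b, w) ≠ x) : ¬ColorConnected c W x := fun hx =>
  hab <| ColorReach.closed (A := (· = b))
    (fun _ q hpq hp => by_contra fun hq => hiso q hpq.2.1 hq (hp ▸ hpq.2.2.2)) (hx b hb a ha) rfl

lemma exists_colorReach_adj_of_colorConnected_insert (hv : v ∉ W)
    (hx : ColorConnected c (insert v W) x) (hw : w ∈ W) :
    ∃ a, ColorReach c W x w a ∧ c s(v, a) = x := by
  by_contra! hno
  refine hv (ColorReach.closed (A := fun z => z ∈ W ∧ ColorReach c W x w z) ?_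
    (hx w (mem_insert_of_mem hw) v (mem_insert_self v W)) ⟨hw, .refl⟩).1
  rintro p q ⟨-, hq, hpq, hcol⟩ ⟨hp, hwp⟩
  obtain rfl | hq := mem_insert.1 hq
  · exact absurd ((color_comm c _ _).trans hcol) (hno p hwp)
  · exact ⟨hq, hwp.tail ⟨hp, hq, hpq, hcol⟩⟩

lemma color_insert_eq_or_of_not_colorReach (hc : IsGallai c) (hv : v ∉ W)
    (hx : ColorConnected c (insert v W) x) (hu : u ∈ W) (hw : w ∈ W)
    (hnr : ¬ColorReach c W x u w) : c s(v, w) = x ∨ c s(v, w) = c s(u, w) := by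
  obtain ⟨a, hua, hva⟩ := exists_colorReach_adj_of_colorConnected_insert hv hx hu
  have haw : c s(w, a) = c s(w, u) := color_eq_of_not_colorReach hc hu hw hnr hua
  have huw : c s(w, u) ≠ x := fun h =>
    hnr (.single ⟨hu, hw, fun h' => hnr (h' ▸ .refl), color_comm c u w ▸ h⟩)
  have hva' : v ≠ a := fun h => hv (h ▸ hua.mem hu)
  have haw' : a ≠ w := fun h => hnr (h ▸ hua)
  rcases hc v a w hva' haw' (fun h => hv (h ▸ hw)) with h | h | h
  · exact absurd (hva.symm.trans (h.trans ((color_comm c a w).trans haw))).symm huw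
  · exact .inr (h.symm.trans ((color_comm c a w).trans (haw.trans (color_comm c w u))))
  · exact .inl (h.symm.trans hva)

lemma color_insert_eq_or_of_not_colorConnected (hc : IsGallai c) (hv : v ∉ W)
    (hx : ColorConnected c (insert v W) x) (hx' : ¬ColorConnected c W x) {σ : C} (hσx : σ ≠ x)
    (hσ : ColorConnected c (insert v W) σ) (hw : w ∈ W) : c s(v, w) = x ∨ c s(v, w) = σ := by
  by_contra! hγ
  obtain ⟨u, hu, hwu⟩ : ∃ u ∈ W, ¬ColorReach c W x w u := by
    by_contra! h
    exact hx' fun a ha b hb => (h a ha).symm.trans (h b hb)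
  have hout : ∀ z ∈ W, ¬ColorReach c W x w z → c s(z, w) = c s(v, w) := fun z hz hwz =>
    ((color_insert_eq_or_of_not_colorReach hc hv hx hz hw fun h => hwz h.symm).resolve_left
      hγ.1).symm
  -- hence no `σ`-edge leaves the `x`-component of `w`, which does not contain `v`
  refine hv (ColorReach.closed (A := fun z => z ∈ W ∧ ColorReach c W x w z) ?_
    (hσ w (mem_insert_of_mem hw) v (mem_insert_self v W)) ⟨hw, .refl⟩).1
  rintro p q ⟨-, hq, hpq, hcol⟩ ⟨hp, hwp⟩
  obtain rfl | hq := mem_insert.1 hq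
  · exfalso
    have hup : c s(u, p) = c s(u, w) := color_eq_of_not_colorReach hc hw hu hwu hwp
    rcases color_insert_eq_or_of_not_colorReach hc hv hx hu hp
      (fun h => hwu (hwp.trans h.symm)) with h | h
    · exact hσx (hcol.symm.trans ((color_comm c p q).trans h))
    · exact hγ.2 ((hout u hu hwu).symm.trans (hup.symm.trans
        (h.symm.trans ((color_comm c q p).trans hcol))))
  · refine ⟨hq, ?_⟩
    by_contra hwq
    have hqp : c s(q, p) = c s(q, w) := color_eq_of_not_colorReach hc hw hq hwq hwp
    exact hγ.2 ((hout q hq hwq).symm.trans (hqp.symm.trans ((color_comm c q p).trans hcol)))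

variable [DecidableEq C]

def usedColors (c : Sym2 (Fin n) → C) (W : Finset (Fin n)) : Finset C :=
  W.offDiag.image fun p => c s(p.1, p.2)

lemma mem_usedColors {y : C} :
    y ∈ usedColors c W ↔ ∃ a ∈ W, ∃ b ∈ W, a ≠ b ∧ c s(a, b) = y := by
  simp [usedColors, and_assoc]

lemma card_usedColors_insert_le (hc : IsGallai c) (hv : v ∉ W) :
    #(usedColors c (insert v W)) ≤ #(usedColors c W) + 1 := by
  set N := {y ∈ W.image fun u => c s(v, u) | y ∉ usedColors c W}
  have hN : #N ≤ 1 := by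
    refine card_le_one.2 fun y₁ hy₁ y₂ hy₂ => ?_
    simp only [N, mem_filter, mem_image] at hy₁ hy₂
    obtain ⟨⟨u₁, hu₁, rfl⟩, hn₁⟩ := hy₁
    obtain ⟨⟨u₂, hu₂, rfl⟩, hn₂⟩ := hy₂
    by_cases h : u₁ = u₂
    · rw [h]
    have hmem : c s(u₁, u₂) ∈ usedColors c W := mem_usedColors.2 ⟨u₁, hu₁, u₂, hu₂, h, rfl⟩
    rcases hc v u₁ u₂ (fun h => hv (h ▸ hu₁)) h (fun h => hv (h ▸ hu₂)) with h' | h' | h'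
    · exact absurd (h' ▸ hmem) hn₁
    · exact absurd (h' ▸ hmem) hn₂
    · exact h'
  have hv' : ∀ u ∈ W, c s(v, u) ∈ usedColors c W ∪ N := fun u hu => by
    by_cases h : c s(v, u) ∈ usedColors c W
    · exact mem_union_left _ h
    · exact mem_union_right _ (mem_filter.2 ⟨mem_image_of_mem _ hu, h⟩)
  have hsub : usedColors c (insert v W) ⊆ usedColors c W ∪ N := by
    intro y hy
    obtain ⟨a, ha, b, hb, hab, rfl⟩ := mem_usedColors.1 hy
    rcases mem_insert.1 ha with rfl | haW
    · exact hv' b ((mem_insert.1 hb).resolve_left hab.symm)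
    rcases mem_insert.1 hb with rfl | hbW
    · exact color_comm c b a ▸ hv' a haW
    · exact mem_union_left _ (mem_usedColors.2 ⟨a, haW, b, hbW, hab, rfl⟩)
  calc _ ≤ #(usedColors c W ∪ N) := card_le_card hsub
    _ ≤ _ := (card_union_le _ _).trans (by omega)

lemma card_usedColors_lt (hc : IsGallai c) (hW : W.Nonempty) : #(usedColors c W) < #W := by
  induction hW using Finset.Nonempty.cons_induction with
  | singleton a =>
    suffices usedColors c {a} = ∅ by simp [this]
    refine eq_empty_of_forall_notMem fun y hy => ?_
    obtain ⟨p, hp, q, hq, hpq, -⟩ := mem_usedColors.1 hy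
    exact hpq ((mem_singleton.1 hp).trans (mem_singleton.1 hq).symm)
  | cons a s ha _ ih =>
    rw [cons_eq_insert, card_insert_of_notMem ha]
    have := card_usedColors_insert_le hc ha (c := c)
    omega

lemma usedColors_mono {W' : Finset (Fin n)} (h : W ⊆ W') : usedColors c W ⊆ usedColors c W' :=
  image_subset_image (offDiag_mono h)

lemma exists_not_colorConnected (hc : IsGallai c) (hW : 2 < #(usedColors c W)) :
    ∃ x ∈ usedColors c W, ¬ColorConnected c W x := by
  induction W using Finset.induction_on with
  | empty => simp [usedColors] at hW
  | insert v W hv ih =>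
    by_contra! hcon
    obtain ⟨a, ha⟩ : W.Nonempty := by
      by_contra! h
      subst h
      have := card_usedColors_lt hc (singleton_nonempty v) (c := c)
      simp only [insert_empty, card_singleton] at this hW
      omega
    have hat : ∀ y ∈ usedColors c (insert v W), ∃ u ∈ W, c s(v, u) = y := by
      intro y hy
      by_contra! h
      exact not_colorConnected_of_isolated (mem_insert_of_mem ha) (mem_insert_self v W)
        (fun h => hv (h ▸ ha)) (fun w hw hwv => h w ((mem_insert.1 hw).resolve_left hwv))
        (hcon y hy)
    obtain hsmall | hbig := le_or_gt #(usedColors c W) 2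
    · -- a color `γ` used only at `v` isolates every vertex `b` with `c s(v, b) ≠ γ`
      obtain ⟨γ, hγ, hγW⟩ := exists_mem_notMem_of_card_lt_card
        (show #(usedColors c W) < #(usedColors c (insert v W)) by omega)
      obtain ⟨α, hα, hαγ⟩ := exists_mem_ne (show 1 < #(usedColors c (insert v W)) by omega) γ
      obtain ⟨b, hb, hvb⟩ := hat α hα
      refine not_colorConnected_of_isolated (mem_insert_self v W) (mem_insert_of_mem hb)
        (fun h => hv (h ▸ hb)) (fun w hw hwb => ?_) (hcon γ hγ)
      rcases mem_insert.1 hw with rfl | hw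
      · exact (color_comm c b w).trans hvb ▸ hαγ
      · exact fun h => hγW (h ▸ mem_usedColors.2 ⟨b, hb, w, hw, hwb.symm, rfl⟩)
    · obtain ⟨x, hx, hx'⟩ := ih hbig
      have hxW := usedColors_mono (subset_insert v W) hx
      obtain ⟨σ₁, hσ₁, σ₂, hσ₂, hσ⟩ := one_lt_card.1
        (show 1 < #((usedColors c (insert v W)).erase x) by rw [card_erase_of_mem hxW]; omega)
      obtain ⟨u, hu, hvu⟩ := hat σ₁ (mem_of_mem_erase hσ₁)
      rcases color_insert_eq_or_of_not_colorConnected hc hv (hcon x hxW) hx'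
        (ne_of_mem_erase hσ₂) (hcon σ₂ (mem_of_mem_erase hσ₂)) hu with h | h
      · exact ne_of_mem_erase hσ₁ (hvu ▸ h)
      · exact hσ (hvu ▸ h)

def edgesAvoiding (c : Sym2 (Fin n) → C) (W : Finset (Fin n)) (S : Finset C) :
    Finset (Sym2 (Fin n)) :=
  {e ∈ W.sym2 | ¬e.IsDiag ∧ c e ∉ S}

variable {S : Finset C}

lemma card_edgesAvoiding_le : #(edgesAvoiding c W S) ≤ (#W).choose 2 :=
  card_sym2_filter_not_isDiag W ▸ card_le_card fun _ he =>
    mem_filter.2 ⟨(mem_filter.1 he).1, (mem_filter.1 he).2.1⟩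

lemma edgesAvoiding_anti {S' : Finset C} (h : S ⊆ S') :
    edgesAvoiding c W S' ⊆ edgesAvoiding c W S :=
  fun _ he => mem_filter.2 ⟨(mem_filter.1 he).1, (mem_filter.1 he).2.1,
    fun hS => (mem_filter.1 he).2.2 (h hS)⟩

lemma card_edgesAvoiding_insert_le :
    #(edgesAvoiding c (insert v W) S) ≤ #(edgesAvoiding c W S) + #{u ∈ W | c s(v, u) ∉ S} := by
  refine (card_le_card (t := edgesAvoiding c W S ∪ {u ∈ W | c s(v, u) ∉ S}.image (s(v, ·)))
    ?_).trans ((card_union_le _ _).trans (Nat.add_le_add_left card_image_le _))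
  intro e he
  simp only [edgesAvoiding, mem_filter, sym2_insert, mem_union, mem_image] at he
  obtain ⟨⟨u, hu, rfl⟩ | he, hd, hS⟩ := he
  · rcases mem_insert.1 hu with rfl | hu
    · exact absurd (Sym2.mk_isDiag_iff.2 rfl) hd
    · exact mem_union_right _ (mem_image_of_mem _ (mem_filter.2 ⟨hu, hS⟩))
  · exact mem_union_left _ (mem_filter.2 ⟨he, hd, hS⟩)

lemma exists_colorConnected_card_edgesAvoiding_le [Nonempty C] (hc : IsGallai c) (hW : W.Nonempty) :
    ∃ x, ColorConnected c W x ∧ #(edgesAvoiding c W {x}) ≤ (#W - 1).choose 2 := by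
  induction hW using Finset.Nonempty.cons_induction with
  | singleton a =>
    refine ⟨Classical.arbitrary C, fun p hp q hq => ?_, card_edgesAvoiding_le.trans (by simp)⟩
    rw [mem_singleton.1 hp, mem_singleton.1 hq]
  | cons v W hv hW ih =>
    obtain ⟨i, hconn, hcount⟩ := ih
    rw [cons_eq_insert, card_insert_of_notMem hv, Nat.add_sub_cancel]
    obtain ⟨m, hm⟩ : ∃ m, #W = m + 1 := ⟨#W - 1, (Nat.sub_add_cancel hW.card_pos).symm⟩
    have hstar (j : C) (hj : ∀ b ∈ W, ColorReach c (insert v W) j v b) :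
        ColorConnected c (insert v W) j := by
      have hj' : ∀ b ∈ insert v W, ColorReach c (insert v W) j v b := fun b hb =>
        (mem_insert.1 hb).elim (fun h => h ▸ .refl) (hj b)
      exact fun a ha b hb => (hj' a ha).symm.trans (hj' b hb)
    by_cases hvi : ∃ u ∈ W, c s(v, u) = i
    · obtain ⟨u, hu, hvu⟩ := hvi
      refine ⟨i, hstar i fun b hb => .head ⟨mem_insert_self v W, mem_insert_of_mem hu,
        fun h => hv (h ▸ hu), hvu⟩ ((hconn u hu b hb).mono (subset_insert v W)), ?_⟩
      have hmiss : #{u ∈ W | c s(v, u) ∉ ({i} : Finset C)} < #W :=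
        card_lt_card (filter_ssubset.2 ⟨u, hu, by simp [hvu]⟩)
      have := card_edgesAvoiding_insert_le (c := c) (v := v) (W := W) (S := {i})
      rw [hm, succ_choose_two]
      rw [hm, Nat.add_sub_cancel] at hcount
      omega
    · push Not at hvi
      obtain ⟨u₀, hu₀⟩ := hW
      have hconst : ∀ u ∈ W, c s(v, u) = c s(v, u₀) := fun u hu =>
        color_eq_of_colorReach hc
          (fun p hp => ⟨fun h => hv (h ▸ hp.mem hu₀), hvi p (hp.mem hu₀)⟩) (hconn u₀ hu₀ u hu)
      refine ⟨c s(v, u₀), hstar _ fun b hb => .single ⟨mem_insert_self v W, mem_insert_of_mem hb,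
        fun h => hv (h ▸ hb), hconst b hb⟩, ?_⟩
      have hmiss : #{u ∈ W | c s(v, u) ∉ ({c s(v, u₀)} : Finset C)} = 0 := by
        simp only [card_eq_zero, filter_eq_empty_iff, mem_singleton, not_not]
        exact hconst
      have := card_edgesAvoiding_insert_le (c := c) (v := v) (W := W) (S := {c s(v, u₀)})
      have := card_edgesAvoiding_le (c := c) (W := W) (S := {c s(v, u₀)})
      omega

def CrossColored (c : Sym2 (Fin n) → C) (W : Finset (Fin n)) (π : Fin n → Fin n)
    (R : Finset C) : Prop :=
  ∀ a ∈ W, ∀ b ∈ W, π a ≠ π b → c s(a, b) ∈ R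

/-- Gallai's decomposition theorem, the partition of `W` being given by the fibres of `π`. -/
lemma exists_crossColored (hc : IsGallai c) (hW : 2 ≤ #W) :
    ∃ (π : Fin n → Fin n) (R : Finset C),
      #R ≤ 2 ∧ 1 < #(W.image π) ∧ #R < #(W.image π) ∧ CrossColored c W π R := by
  induction W using Finset.strongInduction with
  | H W ih =>
  obtain hfew | hmany := le_or_gt #(usedColors c W) 2
  · refine ⟨id, usedColors c W, hfew, ?_, ?_,
      fun a ha b hb hab => mem_usedColors.2 ⟨a, ha, b, hb, hab, rfl⟩⟩
    · rw [image_id]; omega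
    · rw [image_id]; exact card_usedColors_lt hc (card_pos.1 (by omega))
  obtain ⟨x, hx, hnc⟩ := exists_not_colorConnected hc hmany
  obtain ⟨s₀, hs₀, t₀, ht₀, hst, hcol⟩ := mem_usedColors.1 hx
  obtain ⟨w₀, hw₀, hw₀D⟩ : ∃ w₀ ∈ W, ¬ColorReach c W x s₀ w₀ := by
    by_contra! h
    exact hnc fun a ha b hb => (h a ha).symm.trans (h b hb)
  -- contract the `x`-component of `s₀`, which has at least two vertices, to `s₀`
  classical
  let ρ : Fin n → Fin n := fun z => if ColorReach c W x s₀ z then s₀ else z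
  have hρ_of (z : Fin n) (hz : ColorReach c W x s₀ z) : ρ z = s₀ := if_pos hz
  have hρ_not (z : Fin n) (hz : ¬ColorReach c W x s₀ z) : ρ z = z := if_neg hz
  have hρW : ∀ z ∈ W, ρ z ∈ W := fun z hz => by
    by_cases h : ColorReach c W x s₀ z
    · rw [hρ_of z h]; exact hs₀
    · rw [hρ_not z h]; exact hz
  have hsub : W.image ρ ⊂ W := by
    refine Finset.ssubset_iff_subset_ne.2 ⟨image_subset_iff.2 hρW, fun h => ?_⟩
    have ht₀' : ColorReach c W x s₀ t₀ := .single ⟨hs₀, ht₀, hst, hcol⟩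
    obtain ⟨z, -, hzt⟩ := mem_image.1 (h.symm ▸ ht₀ : t₀ ∈ W.image ρ)
    by_cases hr : ColorReach c W x s₀ z
    · exact hst ((hρ_of z hr).symm.trans hzt)
    · rw [hρ_not z hr] at hzt
      exact hr (hzt ▸ ht₀')
  have hcard : 2 ≤ #(W.image ρ) := by
    refine one_lt_card.2 ⟨s₀, mem_image.2 ⟨s₀, hs₀, hρ_of s₀ .refl⟩, w₀,
      mem_image.2 ⟨w₀, hw₀, hρ_not w₀ hw₀D⟩, fun h => hw₀D (h ▸ .refl)⟩
  obtain ⟨π, R, hR, hπ, hRπ, hcross⟩ := ih _ hsub hcard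
  have hρcol : ∀ a ∈ W, ∀ b ∈ W, ρ a ≠ ρ b → c s(a, b) = c s(ρ a, ρ b) := by
    intro a ha b hb hab
    by_cases hra : ColorReach c W x s₀ a <;> by_cases hrb : ColorReach c W x s₀ b
    · exact absurd ((hρ_of a hra).trans (hρ_of b hrb).symm) hab
    · rw [hρ_of a hra, hρ_not b hrb, color_comm c a b, color_comm c s₀ b]
      exact color_eq_of_not_colorReach hc hs₀ hb hrb hra
    · rw [hρ_not a hra, hρ_of b hrb]
      exact color_eq_of_not_colorReach hc hs₀ ha hra hrb
    · rw [hρ_not a hra, hρ_not b hrb]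
  refine ⟨π ∘ ρ, R, hR, ?_, ?_, fun a ha b hb hab => ?_⟩
  · rwa [← image_image]
  · rwa [← image_image]
  · rw [hρcol a ha b hb fun h => hab (congrArg π h)]
    exact hcross _ (mem_image_of_mem ρ ha) _ (mem_image_of_mem ρ hb) hab

lemma card_edgesAvoiding_le_sum_fibers {π : Fin n → Fin n} {R : Finset C}
    (hcross : CrossColored c W π R) (hRS : R ⊆ S) :
    #(edgesAvoiding c W S) ≤ ∑ j ∈ W.image π, #(edgesAvoiding c {a ∈ W | π a = j} S) := by
  refine (card_le_card fun e => ?_).trans card_biUnion_le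
  induction e using Sym2.ind with
  | h a b =>
  intro he
  simp only [edgesAvoiding, mem_filter, mk_mem_sym2_iff, mem_biUnion, mem_image] at he ⊢
  obtain ⟨⟨ha, hb⟩, hd, hS⟩ := he
  have hab : π a = π b := by_contra fun h => hS (hRS (hcross a ha b hb h))
  exact ⟨π a, ⟨a, ha, rfl⟩, ⟨⟨ha, rfl⟩, hb, hab.symm⟩, hd, hS⟩

lemma exists_card_edgesAvoiding_le (hc : IsGallai c) (ℓ : ℕ) (W : Finset (Fin n)) :
    ∃ S : Finset C, #S ≤ ℓ ∧ #(edgesAvoiding c W S) ≤ (#W - ℓ).choose 2 := by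
  induction W using Finset.strongInduction generalizing ℓ with
  | H W ih =>
  by_cases htriv : ℓ = 0 ∨ #W ≤ 1
  · refine ⟨∅, by simp, card_edgesAvoiding_le.trans ?_⟩
    rcases htriv with rfl | h
    · rfl
    · rw [Nat.choose_eq_zero_of_lt (by omega : #W < 2)]; exact Nat.zero_le _
  obtain rfl | hℓ := eq_or_ne ℓ 1
  · obtain ⟨a, ha⟩ : W.Nonempty := card_pos.1 (by omega)
    have : Nonempty C := ⟨c s(a, a)⟩
    obtain ⟨x, -, hx⟩ := exists_colorConnected_card_edgesAvoiding_le hc ⟨a, ha⟩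
    exact ⟨{x}, by simp, hx⟩
  obtain ⟨π, R, hR, hπ, hRπ, hcross⟩ := exists_crossColored hc (W := W) (by omega)
  set P := W.image π
  have hfiber : ∀ j ∈ P, {a ∈ W | π a = j} ⊂ W := fun j _ => by
    obtain ⟨j', hj', hj'j⟩ := exists_mem_ne hπ j
    obtain ⟨a, ha, rfl⟩ := mem_image.1 hj'
    exact filter_ssubset.2 ⟨a, ha, hj'j⟩
  have hsz : ∀ j ∈ P, 1 ≤ #{a ∈ W | π a = j} := fun j hj => by
    obtain ⟨a, ha, rfl⟩ := mem_image.1 hj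
    exact card_pos.2 ⟨a, mem_filter.2 ⟨ha, rfl⟩⟩
  -- after paying for the colors `R` between the parts, share the rest of the budget
  obtain ⟨b, hb, hbud⟩ :=
    exists_budget_sum_choose_two_le P (fun j => #{a ∈ W | π a = j}) hsz (ℓ - #R)
  choose! F hF hFcount using fun j hj => ih _ (hfiber j hj) (b j)
  have hsum : ∑ j ∈ P, #{a ∈ W | π a = j} = #W := (card_eq_sum_card_image π W).symm
  refine ⟨R ∪ P.biUnion F, ?_, ?_⟩
  · calc #(R ∪ P.biUnion F) ≤ #R + ∑ j ∈ P, #(F j) :=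
          (card_union_le _ _).trans (Nat.add_le_add_left card_biUnion_le _)
      _ ≤ #R + ∑ j ∈ P, b j := Nat.add_le_add_left (sum_le_sum hF) _
      _ ≤ ℓ := by omega
  · calc #(edgesAvoiding c W (R ∪ P.biUnion F))
        ≤ ∑ j ∈ P, #(edgesAvoiding c {a ∈ W | π a = j} (R ∪ P.biUnion F)) :=
          card_edgesAvoiding_le_sum_fibers hcross subset_union_left
      _ ≤ ∑ j ∈ P, #(edgesAvoiding c {a ∈ W | π a = j} (F j)) := sum_le_sum fun j hj =>
          card_le_card <|
            edgesAvoiding_anti ((subset_biUnion_of_mem F hj).trans subset_union_right)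
      _ ≤ ∑ j ∈ P, (#{a ∈ W | π a = j} - b j).choose 2 := sum_le_sum hFcount
      _ ≤ (#W + 1 - #P - (ℓ - #R)).choose 2 := hsum ▸ hbud
      _ ≤ (#W - ℓ).choose 2 := Nat.choose_le_choose 2 (by omega)

lemma sum_colorCard_add_card_edgesAvoiding (c : Sym2 (Fin n) → C) (S : Finset C) :
    ∑ i ∈ S, colorCard c i + #(edgesAvoiding c univ S) = n.choose 2 := by
  have hcolored : ∑ i ∈ S, colorCard c i = #{e ∈ univ.sym2 | ¬e.IsDiag ∧ c e ∈ S} := by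
    rw [card_eq_sum_card_fiberwise (f := c) (t := S) fun e he => (mem_filter.1 he).2.2]
    refine sum_congr rfl fun i _ => ?_
    simp only [colorCard, sym2_univ, filter_filter]
    congr 1
    ext e
    simp only [mem_filter, mem_univ, true_and]
    grind
  have hall := card_sym2_filter_not_isDiag (univ : Finset (Fin n))
  rw [card_univ, Fintype.card_fin, ← card_filter_add_card_filter_not (fun e => c e ∈ S),
    filter_filter, filter_filter] at hall
  rw [hcolored, edgesAvoiding, ← hall]

end Gallai

theorem gallai_partial_sums_general (n k : ℕ) (e : ℕ → ℕ)
    (hdec : ∀ i j, i ≤ j → j < k → e j ≤ e i)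
    (c : Sym2 (Fin n) → Fin k) (hc : IsGallai c)
    (hdist : ∀ i : Fin k, colorCard c i = e i.1) :
    ∀ ℓ : ℕ, 1 ≤ ℓ → ℓ ≤ k →
      ∑ j ∈ Finset.range ℓ, (n - 1 - j) ≤ ∑ i ∈ Finset.range ℓ, e i := by
  intro ℓ _ _
  obtain ⟨S, hS, hmiss⟩ := Gallai.exists_card_edgesAvoiding_le hc ℓ Finset.univ
  have htotal := Gallai.sum_colorCard_add_card_edgesAvoiding c S
  have hsorted : ∑ i ∈ S, e i ≤ ∑ j ∈ Finset.range ℓ, e j := by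
    have := Gallai.sum_le_sum_range_card (fun i hi j hj hij => hdec i j hij hj)
      (S.map Fin.valEmbedding) (by simp)
    rw [Finset.sum_map, Finset.card_map] at this
    exact this.trans (Finset.sum_le_sum_of_subset (Finset.range_subset_range.2 hS))
  simp only [hdist] at htotal
  rw [Finset.card_univ, Fintype.card_fin] at hmiss
  have := Gallai.sum_range_sub_add_choose_two n ℓ
  omega

/-- If a Gallai `k`-coloring of `K_n` has decreasing color distribution `e_1 ≥ ⋯ ≥ e_k`,
then every partial sum `e_1 + ⋯ + e_ℓ` is at least `(n-1)+(n-2)+⋯+(n-ℓ)`. -/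
theorem gallai_partial_sums (n k : ℕ) (e : ℕ → ℕ)
    (hdec : ∀ i j, i ≤ j → j < k → e j ≤ e i)
    (hsum : ∑ i ∈ Finset.range k, e i = n * (n - 1) / 2)
    (c : Sym2 (Fin n) → Fin k) (hc : IsGallai c)
    (hdist : ∀ i : Fin k, colorCard c i = e i.1) :
    ∀ ℓ : ℕ, 1 ≤ ℓ → ℓ ≤ k →
      ∑ j ∈ Finset.range ℓ, (n - 1 - j) ≤ ∑ i ∈ Finset.range ℓ, e i :=
  gallai_partial_sums_general n k e hdec c hc hdist
end

section
/- If a Gallai k-coloring of K_n is balanced, i.e., the sizes of any two color classes differ by at most 1, and every color class is nonempty, then k ≤ ⌈n/2⌉. -/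
/-- Every Gallai coloring of a complete graph has a color class containing a spanning
connected subgraph, encoded by a "parent" function `p` with a height function `h`. -/
lemma gallai_spanning {C : Type*} :
    ∀ (n : ℕ) (c : Sym2 (Fin (n+1)) → C), IsGallai c →
      ∃ (i : C) (r : Fin (n+1)) (p : Fin (n+1) → Fin (n+1)) (h : Fin (n+1) → ℕ),
        ∀ v, v ≠ r → c s(v, p v) = i ∧ p v ≠ v ∧ h (p v) < h v := by
  intro n
  induction n with
  | zero =>
    intro c _
    exact ⟨c s(0,0), 0, id, fun _ => 0, fun v hv =>
      absurd (Fin.fin_one_eq_zero v) hv⟩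
  | succ n ih =>
    intro c hc
    set v : Fin (n+2) := Fin.last (n+1) with hvdef
    have hcast : ∀ a b : Fin (n+1),
        (c ∘ Sym2.map Fin.castSucc) s(a,b) = c s(a.castSucc, b.castSucc) := by
      intro a b; simp
    have hc' : IsGallai (c ∘ Sym2.map Fin.castSucc) := by
      intro a b d hab hbd had
      rw [hcast, hcast, hcast]
      exact hc _ _ _ (by simpa [Fin.castSucc_inj] using hab)
        (by simpa [Fin.castSucc_inj] using hbd) (by simpa [Fin.castSucc_inj] using had)
    obtain ⟨i, r, p, h, H⟩ := ih _ hc'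
    by_cases hA : ∃ u : Fin (n+1), c s(u.castSucc, v) = i
    · obtain ⟨u, hu⟩ := hA
      refine ⟨i, r.castSucc, Fin.lastCases u.castSucc (fun w => (p w).castSucc),
        Fin.lastCases (h u + 1) h, ?_⟩
      intro w hw
      rcases Fin.eq_castSucc_or_eq_last w with ⟨x, rfl⟩ | rfl
      · have hx : x ≠ r := by
          intro e; exact hw (by rw [e])
        obtain ⟨h1, h2, h3⟩ := H x hx
        rw [hcast] at h1
        refine ⟨by simpa using h1, ?_, ?_⟩
        · simpa [Fin.castSucc_inj] using h2
        · simpa using h3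
      · refine ⟨?_, ?_, ?_⟩
        · rw [Sym2.eq_swap] at hu
          simpa using hu
        · simpa using (Fin.castSucc_lt_last u).ne
        · simp
    · push_neg at hA
      have key : ∀ m (u : Fin (n+1)), h u ≤ m →
          c s(u.castSucc, v) = c s(r.castSucc, v) := by
        intro m
        induction m with
        | zero =>
          intro u hu
          by_cases hur : u = r
          · rw [hur]
          · exact absurd hu (by have := (H u hur).2.2; omega)
        | succ m ihm =>
          intro u hu
          by_cases hur : u = r
          · rw [hur]
          · obtain ⟨h1, h2, h3⟩ := H u hur
            rw [hcast] at h1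
            have step : c s((p u).castSucc, v) = c s(u.castSucc, v) := by
              have htri := hc u.castSucc (p u).castSucc v
                (by simpa [Fin.castSucc_inj] using (Ne.symm h2))
                ((Fin.castSucc_lt_last _).ne) ((Fin.castSucc_lt_last _).ne)
              rcases htri with h' | h' | h'
              · exact absurd (h'.symm.trans h1) (hA (p u))
              · exact h'
              · exact absurd (h'.symm.trans h1) (hA u)
            rw [← step]
            exact ihm (p u) (by omega)
      refine ⟨c s(r.castSucc, v), v, fun _ => v, Fin.lastCases 0 (fun _ => 1), ?_⟩
      intro w hw
      rcases Fin.eq_castSucc_or_eq_last w with ⟨x, rfl⟩ | rfl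
      · refine ⟨key (h x) x le_rfl, Ne.symm hw, ?_⟩
        simp [hvdef]
      · exact absurd rfl hw

lemma colorCard_ge {m : ℕ} {C : Type*} [DecidableEq C] (c : Sym2 (Fin m) → C) (i : C)
    (r : Fin m) (p : Fin m → Fin m) (h : Fin m → ℕ)
    (H : ∀ w, w ≠ r → c s(w, p w) = i ∧ p w ≠ w ∧ h (p w) < h w) :
    m - 1 ≤ colorCard c i := by
  classical
  have hcard : (Finset.univ.erase r).card = m - 1 := by
    rw [Finset.card_erase_of_mem (Finset.mem_univ r), Finset.card_univ, Fintype.card_fin]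
  rw [← hcard]
  apply Finset.card_le_card_of_injOn (fun w => s(w, p w))
  · intro w hw
    have hwr : w ≠ r := (Finset.mem_erase.1 hw).1
    obtain ⟨h1, h2, _⟩ := H w hwr
    simp only [Finset.mem_filter, Finset.mem_univ, true_and]
    exact Finset.mem_filter.2 ⟨Finset.mem_univ _, by simp [Ne.symm h2], h1⟩
  · intro a ha b hb hab
    by_contra hne
    rw [Sym2.eq_iff] at hab
    obtain ⟨_, _, h3a⟩ := H a (Finset.mem_erase.1 ha).1
    obtain ⟨_, _, h3b⟩ := H b (Finset.mem_erase.1 hb).1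
    rcases hab with ⟨e1, _⟩ | ⟨e1, e2⟩
    · exact hne e1
    · rw [e2] at h3a
      rw [← e1] at h3b
      omega

lemma sum_colorCard {n k : ℕ} (c : Sym2 (Fin n) → Fin k) :
    ∑ i : Fin k, colorCard c i = n.choose 2 := by
  classical
  have h1 : (Finset.univ.filter (fun e : Sym2 (Fin n) => ¬ e.IsDiag)).card = n.choose 2 := by
    rw [← Fintype.card_subtype, Sym2.card_subtype_not_diag, Fintype.card_fin]
  rw [← h1, Finset.card_eq_sum_card_fiberwise (f := c) (t := Finset.univ)
    (fun x _ => Finset.mem_univ _)]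
  apply Finset.sum_congr rfl
  intro i _
  rw [Finset.filter_filter]
  rfl

/-- A balanced Gallai `k`-coloring of `K_n` with all color classes nonempty satisfies
`k ≤ ⌈n/2⌉`. -/
theorem balanced_gallai_color_bound (n k : ℕ) (c : Sym2 (Fin n) → Fin k)
    (hc : IsGallai c)
    (hne : ∀ i : Fin k, 1 ≤ colorCard c i)
    (hbal : ∀ i j : Fin k, colorCard c i ≤ colorCard c j + 1) :
    k ≤ (n + 1) / 2 := by
  classical
  rcases Nat.eq_zero_or_pos k with hk | hk
  · omega
  have hktot : k ≤ n.choose 2 := by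
    calc k = ∑ _i : Fin k, 1 := by simp
    _ ≤ ∑ i : Fin k, colorCard c i := Finset.sum_le_sum (fun i _ => hne i)
    _ = n.choose 2 := sum_colorCard c
  have hn2 : 2 ≤ n := by
    by_contra hn
    have : n.choose 2 = 0 := Nat.choose_eq_zero_of_lt (by omega)
    omega
  obtain ⟨n', rfl⟩ : ∃ n', n = n' + 2 := ⟨n - 2, by omega⟩
  obtain ⟨i, r, p, h, H⟩ := gallai_spanning (n' + 1) c hc
  have hi : n' + 1 ≤ colorCard c i := by
    have := colorCard_ge c i r p h H
    omega
  have hall : ∀ j, n' ≤ colorCard c j := by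
    intro j
    have := hbal i j
    omega
  have hsum2 : (k - 1) * n' + (n' + 1) ≤ ∑ j : Fin k, colorCard c j := by
    rw [← Finset.sum_erase_add _ _ (Finset.mem_univ i)]
    have hb1 : (k - 1) * n' ≤ ∑ j ∈ Finset.univ.erase i, colorCard c j := by
      have := Finset.card_nsmul_le_sum (Finset.univ.erase i) (colorCard c) n'
        (fun j _ => hall j)
      simpa [Finset.card_erase_of_mem, smul_eq_mul] using this
    omega
  rw [sum_colorCard c] at hsum2
  -- Now arithmetic: (k-1)*n' + n' + 1 ≤ (n'+2).choose 2 = (n'+2)(n'+1)/2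
  have hch : 2 * ((n' + 2).choose 2) = (n' + 2) * (n' + 1) := by
    rw [Nat.choose_two_right]
    have hdvd : 2 ∣ (n' + 2) * (n' + 2 - 1) := by
      simpa [Nat.mul_comm] using (Nat.even_mul_succ_self (n' + 1)).two_dvd
    rw [Nat.mul_div_cancel' hdvd]
    rfl
  rcases Nat.eq_zero_or_pos n' with hn0 | hn0
  · subst hn0
    simp at hktot
    omega
  -- n' ≥ 1
  obtain ⟨k', rfl⟩ : ∃ k', k = k' + 1 := ⟨k - 1, by omega⟩
  simp only [Nat.add_sub_cancel] at hsum2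
  suffices hfin : 2 * k' ≤ n' + 1 by omega
  by_contra hcon
  have h2k : n' + 2 ≤ 2 * k' := by omega
  have hm : (n' + 2) * n' ≤ (2 * k') * n' := Nat.mul_le_mul_right _ h2k
  have e1 : 2 * (k' * n' + (n' + 1)) ≤ (n' + 2) * (n' + 1) := by omega
  have e2 : (n' + 2) * (n' + 1) = n' * n' + 3 * n' + 2 := by ring
  have e3 : (n' + 2) * n' = n' * n' + 2 * n' := by ring
  have e4 : (2 * k') * n' = 2 * (k' * n') := by ring
  omega
end

section
/- For every n ≥ 2, the edge coloring of K_n on vertex set {0,...,n-1} in which the edge {i,j} with i > j gets color n - i (i.e., each star S(i) forms its own color class) is a Gallai (n-1)-coloring in which, for every 1 ≤ ℓ ≤ n-1, the ℓ largest color classes together contain exactly (n-1) + (n-2) + ... + (n-ℓ) edges. -/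
/-- The coloring of `K_n` where the edge `{i,j}` with `i > j` gets color `n - i`. -/
def starColoring (n : ℕ) : Sym2 (Fin n) → ℕ :=
  Sym2.lift ⟨fun i j => n - max i.1 j.1, fun a b => by simp [Nat.max_comm]⟩

lemma starColoring_mk {n : ℕ} (a b : Fin n) :
    starColoring n s(a, b) = n - max a.1 b.1 := rfl

lemma colorCard_star (n : ℕ) (t : ℕ) (ht1 : 1 ≤ t) (ht2 : t ≤ n - 1) :
    colorCard (starColoring n) t = n - t := by
  have hn : 1 ≤ n := le_trans ht1 (le_trans ht2 (Nat.sub_le n 1))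
  set m : ℕ := n - t with hm
  have hmn : m < n := by omega
  have key : ∀ a b : Fin n, a ≠ b → (starColoring n s(a,b) = t ↔ max a.1 b.1 = m) := by
    intro a b hab
    rw [starColoring_mk]
    constructor
    · intro h
      have := max_lt a.2 b.2
      omega
    · intro h; omega
  rw [colorCard, ← Finset.card_range m]
  refine Finset.card_bij' (fun e _ => (Sym2.inf e).1)
    (fun (j : ℕ) hj => s((⟨m, hmn⟩ : Fin n), (⟨j, lt_trans (Finset.mem_range.mp hj) hmn⟩ : Fin n)))
    ?_ ?_ ?_ ?_
  · intro e he
    simp only [Finset.mem_filter, Finset.mem_univ, true_and] at he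
    induction e using Sym2.ind with
    | _ a b =>
      have hab : a ≠ b := by simpa [Sym2.isDiag_iff_proj_eq] using he.1
      have hmax := (key a b hab).mp he.2
      have hab' : a.1 ≠ b.1 := fun h => hab (Fin.ext h)
      simp only [Finset.mem_range, Sym2.inf_mk]
      have : (a ⊓ b).1 = min a.1 b.1 := rfl
      omega
  · intro j hj
    simp only [Finset.mem_range] at hj
    have hne : (⟨m, hmn⟩ : Fin n) ≠ ⟨j, lt_trans hj hmn⟩ := by
      simp only [ne_eq, Fin.mk.injEq]; omega
    simp only [Finset.mem_filter, Finset.mem_univ, true_and, Sym2.isDiag_iff_proj_eq]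
    refine ⟨hne, ?_⟩
    rw [key _ _ hne]
    simp only []; omega
  · intro e he
    simp only [Finset.mem_filter, Finset.mem_univ, true_and] at he
    induction e using Sym2.ind with
    | _ a b =>
      have hab : a ≠ b := by simpa [Sym2.isDiag_iff_proj_eq] using he.1
      have hmax := (key a b hab).mp he.2
      have hab' : a.1 ≠ b.1 := fun h => hab (Fin.ext h)
      have hinf : (Sym2.inf s(a,b)).1 = min a.1 b.1 := rfl
      have hmax' : max a.1 b.1 = m := hmax
      rw [Sym2.eq_iff]
      rcases Nat.lt_or_ge a.1 b.1 with h | h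
      · exact Or.inr ⟨Fin.ext (by simp only []; omega), Fin.ext (by rw [hinf]; omega)⟩
      · exact Or.inl ⟨Fin.ext (by simp only []; omega), Fin.ext (by rw [hinf]; omega)⟩
  · intro j hj
    simp only [Finset.mem_range] at hj
    simp only [Sym2.inf_mk]
    have : ((⟨m, hmn⟩:Fin n) ⊓ (⟨j, lt_trans hj hmn⟩:Fin n)).1 = min m j := rfl
    omega

/-- The star-decomposition coloring is a Gallai `(n-1)`-coloring whose color classes have
sizes `n-1, n-2, …, 1` (color `t` has `n - t` edges for `1 ≤ t ≤ n-1`), so for every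
`1 ≤ ℓ ≤ n-1` the `ℓ` largest color classes together contain exactly
`(n-1)+(n-2)+⋯+(n-ℓ)` edges. -/
theorem starColoring_gallai_sizes (n : ℕ) (hn : 2 ≤ n) :
    IsGallai (starColoring n) ∧
    (∀ t : ℕ, 1 ≤ t → t ≤ n - 1 → colorCard (starColoring n) t = n - t) ∧
    (∀ ℓ : ℕ, 1 ≤ ℓ → ℓ ≤ n - 1 →
      ∑ t ∈ Finset.Icc 1 ℓ, colorCard (starColoring n) t =
        ∑ j ∈ Finset.range ℓ, (n - 1 - j)) := by
  refine ⟨?_, fun t ht1 ht2 => colorCard_star n t ht1 ht2, ?_⟩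
  · intro a b d hab hbd had
    simp only [starColoring_mk]
    omega
  · intro ℓ hl1 hl2
    rw [show Finset.Icc 1 ℓ = Finset.Ico 1 (ℓ + 1) by rw [Finset.Ico_add_one_right_eq_Icc],
      Finset.sum_Ico_eq_sum_range]
    apply Finset.sum_congr (by simp)
    intro j hj
    simp only [Nat.add_sub_cancel, Finset.mem_range] at hj
    rw [colorCard_star n (1 + j) (by omega) (by omega)]
    omega
end

section
/- For every k ≥ 3, the sequence e_1 = C(2k-3, 2) - (k-1), e_2 = e_3 = ... = e_k = 1 cannot be realized as the color distribution of a Gallai k-coloring of K_{2k-3}. -/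
/-!
The `k - 1` edges carrying the colors used only once form a matching: if two of them met at a
vertex `v`, say `vx` and `vy`, the Gallai condition on the triangle `vxy` would force `xy` to
repeat one of their two colors.
A matching of `k - 1` edges needs `2k - 2` vertices, but `K_{2k-3}` has only `2k - 3`.
-/

theorem Sym2.two_mul_card_le_of_pairwiseDisjoint {ι α : Type*} [Fintype ι] [Fintype α]
    [DecidableEq α] (e : ι → Sym2 α) (he : ∀ i, ¬ (e i).IsDiag)
    (hdisj : ∀ i j v, v ∈ e i → v ∈ e j → i = j) :
    2 * Fintype.card ι ≤ Fintype.card α := by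
  have hpair : (Set.univ : Set ι).PairwiseDisjoint fun i => (e i).toFinset := by
    intro i _ j _ hij
    simp only [Function.onFun, Finset.disjoint_left, Sym2.mem_toFinset]
    exact fun v hvi hvj => hij (hdisj i j v hvi hvj)
  calc 2 * Fintype.card ι = (Finset.univ.biUnion fun i => (e i).toFinset).card := by
        rw [Finset.card_biUnion (by simpa using hpair)]
        simp [Sym2.card_toFinset_of_not_isDiag _ (he _), mul_comm]
    _ ≤ Fintype.card α := Finset.card_le_univ _

section

variable {n : ℕ} {C : Type*} [DecidableEq C] {c : Sym2 (Fin n) → C}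

theorem exists_of_colorCard_pos {i : C} (hi : 0 < colorCard c i) :
    ∃ e, ¬ e.IsDiag ∧ c e = i := by
  obtain ⟨e, he⟩ := Finset.card_pos.mp hi
  exact ⟨e, (Finset.mem_filter.mp he).2⟩

theorem eq_of_colorCard_eq_one {i : C} (hi : colorCard c i = 1) {e e' : Sym2 (Fin n)}
    (he : ¬ e.IsDiag) (he' : ¬ e'.IsDiag) (hce : c e = i) (hce' : c e' = i) : e = e' :=
  Finset.card_le_one.mp hi.le e (by simp [he, hce]) e' (by simp [he', hce'])

theorem IsGallai.eq_of_adjacent_of_colorCard_eq_one (hg : IsGallai c) {i j : C}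
    (hi : colorCard c i = 1) (hj : colorCard c j = 1) {v x y : Fin n} (hvx : v ≠ x)
    (hvy : v ≠ y) (hx : c s(v, x) = i) (hy : c s(v, y) = j) : i = j := by
  by_cases hxy : x = y
  · subst hxy
    exact hx.symm.trans hy
  have hvx' : ¬ s(v, x).IsDiag := Sym2.mk_isDiag_iff.not.mpr hvx
  have hvy' : ¬ s(v, y).IsDiag := Sym2.mk_isDiag_iff.not.mpr hvy
  have hxy' : ¬ s(x, y).IsDiag := Sym2.mk_isDiag_iff.not.mpr hxy
  rcases hg x v y (Ne.symm hvx) hvy hxy with h | h | h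
  · rw [← hx, ← hy, ← h, Sym2.eq_swap]
  · have := eq_of_colorCard_eq_one hj hvy' hxy' hy (h ▸ hy)
    rcases Sym2.eq_iff.mp this with ⟨hv, -⟩ | ⟨hv, -⟩
    exacts [absurd hv hvx, absurd hv hvy]
  · rw [Sym2.eq_swap] at h
    have := eq_of_colorCard_eq_one hi hvx' hxy' hx (h ▸ hx)
    rcases Sym2.eq_iff.mp this with ⟨hv, -⟩ | ⟨hv, -⟩
    exacts [absurd hv hvx, absurd hv hvy]

theorem IsGallai.eq_of_mem_of_colorCard_eq_one (hg : IsGallai c) {e e' : Sym2 (Fin n)}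
    (he : ¬ e.IsDiag) (he' : ¬ e'.IsDiag) (h : colorCard c (c e) = 1)
    (h' : colorCard c (c e') = 1) {v : Fin n} (hv : v ∈ e) (hv' : v ∈ e') : e = e' := by
  obtain ⟨x, rfl⟩ := Sym2.mem_iff_exists.mp hv
  obtain ⟨y, rfl⟩ := Sym2.mem_iff_exists.mp hv'
  have hvx : v ≠ x := Sym2.mk_isDiag_iff.not.mp he
  have hvy : v ≠ y := Sym2.mk_isDiag_iff.not.mp he'
  have hcol := hg.eq_of_adjacent_of_colorCard_eq_one h h' hvx hvy rfl rfl
  exact eq_of_colorCard_eq_one h he he' rfl hcol.symm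

end

/-- For `k ≥ 3`, the distribution `(C(2k-3,2) - (k-1), 1, …, 1)` is not realizable as a
Gallai `k`-coloring of `K_{2k-3}`. -/
theorem no_gallai_lower_bound_distribution (k : ℕ) (hk : 3 ≤ k) :
    ¬ ∃ c : Sym2 (Fin (2 * k - 3)) → Fin k, IsGallai c ∧
      colorCard c ⟨0, by omega⟩ = (2 * k - 3) * (2 * k - 4) / 2 - (k - 1) ∧
      (∀ i : Fin k, i ≠ ⟨0, by omega⟩ → colorCard c i = 1) := by
  rintro ⟨c, hg, -, hsingle⟩
  have hsucc (i : Fin (k - 1)) : colorCard c ⟨(i : ℕ) + 1, Nat.add_lt_of_lt_sub i.isLt⟩ = 1 :=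
    hsingle _ (Fin.ne_of_val_ne (Nat.succ_ne_zero i))
  choose e he hce using fun i : Fin (k - 1) => exists_of_colorCard_pos (hsucc i).ge
  have hmatching : ∀ i j v, v ∈ e i → v ∈ e j → i = j := fun i j v hvi hvj => by
    have := hg.eq_of_mem_of_colorCard_eq_one (he i) (he j) (by rw [hce, hsucc])
      (by rw [hce, hsucc]) hvi hvj
    have hc := congrArg c this
    rw [hce, hce] at hc
    simpa [Fin.ext_iff] using hc
  have := Sym2.two_mul_card_le_of_pairwiseDisjoint e he hmatching
  simp only [Fintype.card_fin] at this
  omega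
end

section
/- If every sequence of k positive integers summing to n(n-1)/2 is realizable as the color distribution of a Gallai k-coloring of K_n, then n ≥ 2k - 2. -/
/-!
Realize the distribution `(C(n,2) - (k-1), 1, …, 1)`. In a Gallai coloring two colors that are
each used on exactly one edge cannot meet at a vertex: if `uv` and `uw` are the only edges of
their colors, the triangle `uvw` forces `vw` to repeat one of them. So the `k - 1` singleton
color classes form a matching of `K_n`, whence `2 (k - 1) ≤ n`.
-/

open Finset

section

variable {n : ℕ} {C : Type*} [DecidableEq C] {c : Sym2 (Fin n) → C}

def colorVerts (c : Sym2 (Fin n) → C) (i : C) : Finset (Fin n) :=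
  univ.filter fun v => ∃ w, v ≠ w ∧ c s(v, w) = i

lemma eq_of_colorCard_eq_one_s12 {i : C} (hi : colorCard c i = 1) {x y u v : Fin n}
    (hxy : x ≠ y) (huv : u ≠ v) (hx : c s(x, y) = i) (hu : c s(u, v) = i) :
    s(x, y) = s(u, v) :=
  Finset.card_le_one.mp hi.le _ (by simp [hxy, hx]) _ (by simp [huv, hu])

lemma card_colorVerts_of_colorCard_eq_one {i : C} (hi : colorCard c i = 1) :
    (colorVerts c i).card = 2 := by
  obtain ⟨e, he⟩ := Finset.card_eq_one.mp hi
  induction e using Sym2.ind with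
  | _ a b =>
    have hab : a ≠ b ∧ c s(a, b) = i := by
      simpa [Sym2.mk_isDiag_iff] using he.ge (mem_singleton_self _)
    suffices colorVerts c i = {a, b} by rw [this, card_pair hab.1]
    ext v
    simp only [colorVerts, mem_filter, mem_univ, true_and, mem_insert, mem_singleton]
    constructor
    · rintro ⟨w, hvw, hw⟩
      rcases Sym2.eq_iff.mp (eq_of_colorCard_eq_one_s12 hi hvw hab.1 hw hab.2) with h | h
      exacts [Or.inl h.1, Or.inr h.1]
    · rintro (rfl | rfl)
      · exact ⟨b, hab⟩
      · exact ⟨a, hab.1.symm, Sym2.eq_swap ▸ hab.2⟩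

namespace IsGallai

lemma disjoint_colorVerts (hc : IsGallai c) {i j : C} (hij : i ≠ j)
    (hi : colorCard c i = 1) (hj : colorCard c j = 1) :
    Disjoint (colorVerts c i) (colorVerts c j) := by
  refine Finset.disjoint_left.mpr fun v hvi hvj => ?_
  obtain ⟨x, hvx, hx⟩ := (mem_filter.mp hvi).2
  obtain ⟨y, hvy, hy⟩ := (mem_filter.mp hvj).2
  have hxy : x ≠ y := by rintro rfl; exact hij (hx ▸ hy)
  rcases hc x v y hvx.symm hvy hxy with h | h | h
  · exact hij (by rw [← hx, ← hy, Sym2.eq_swap, h])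
  · rcases Sym2.eq_iff.mp (eq_of_colorCard_eq_one_s12 hj hxy hvy (h ▸ hy) hy) with h' | h'
    exacts [hvx h'.1.symm, hxy h'.1]
  · rcases Sym2.eq_iff.mp (eq_of_colorCard_eq_one_s12 hi hxy hvx (h ▸ Sym2.eq_swap ▸ hx) hx)
      with h' | h'
    exacts [hvx h'.1.symm, hvy h'.2.symm]

lemma two_mul_card_singleton_colors_le [Fintype C] (hc : IsGallai c) :
    2 * (univ.filter fun i => colorCard c i = 1).card ≤ n := by
  set S := univ.filter fun i => colorCard c i = 1
  have hdisj : (S : Set C).PairwiseDisjoint (colorVerts c) := fun i hi j hj hij =>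
    disjoint_colorVerts hc hij (mem_filter.mp hi).2 (mem_filter.mp hj).2
  calc 2 * S.card = ∑ i ∈ S, (colorVerts c i).card := by
        rw [sum_const_nat fun i hi => card_colorVerts_of_colorCard_eq_one (mem_filter.mp hi).2,
          mul_comm]
    _ = (S.biUnion (colorVerts c)).card := (card_biUnion hdisj).symm
    _ ≤ n := by simpa using card_le_univ (S.biUnion (colorVerts c))

end IsGallai

end

/-- If every sequence of `k` positive integers summing to `C(n,2)` is realizable as the
color distribution of a Gallai `k`-coloring of `K_n` (and such sequences exist, i.e.
`k ≤ C(n,2)`), then `n ≥ 2k - 2`. -/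
theorem gallai_all_realizable_lower_bound (n k : ℕ) (hnk : k ≤ n * (n - 1) / 2)
    (H : ∀ e : ℕ → ℕ, (∀ i, i < k → 0 < e i) →
      ∑ i ∈ Finset.range k, e i = n * (n - 1) / 2 →
      ∃ c : Sym2 (Fin n) → Fin k, IsGallai c ∧ ∀ i : Fin k, colorCard c i = e i.1) :
    2 * k ≤ n + 2 := by
  rcases k with _ | k
  · omega
  set m := n * (n - 1) / 2
  obtain ⟨c, hc, hcard⟩ := H (fun i => if i = 0 then m - k else 1)
    (fun i _ => by split_ifs <;> omega)
    (by simp [sum_range_succ']; omega)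
  have hsingle : univ.erase 0 ⊆ univ.filter fun i : Fin (k + 1) => colorCard c i = 1 :=
    fun i hi => by
      have hi0 : (i : ℕ) ≠ 0 := Fin.val_ne_iff.mpr (ne_of_mem_erase hi)
      simp [hcard i, hi0]
  have hmatching : 2 * k ≤ n := calc
    2 * k = 2 * (univ.erase (0 : Fin (k + 1))).card := by simp
    _ ≤ 2 * (univ.filter fun i => colorCard c i = 1).card := by gcongr
    _ ≤ n := hc.two_mul_card_singleton_colors_le
  omega
end
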